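/- arXiv:1901.05545 — 5 statements merged into one kernel-verified Lean document; each statement's English description precedes it below -/
import Mathlib

section
/- If the complex sequence ψ(f) of length L = 2^m lies in a complementary set of size n (all of whose member sequences are unimodular of length L), then its PMEPR is at most n. -/
open Complex Finset

/-- `q`-th root of unity `exp(2πi/q)`. -/
noncomputable def wq (q : ℕ) : ℂ := Complex.exp (2 * Real.pi * Complex.I / q)

/-- binary digits of `i` as a vector of length `m`. -/
def bitv (m i : ℕ) : Fin m → ℕ := fun α => i / 2 ^ (α : ℕ) % 2

/-- the length-`2^m` complex sequence associated with a GBF `f`. -/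
noncomputable def psi (q m : ℕ) (f : (Fin m → ℕ) → ZMod q) : ℕ → ℂ :=
  fun i => wq q ^ (f (bitv m i)).val

/-- aperiodic cross-correlation of length-`L` sequences at integer shift `τ`. -/
noncomputable def cC (L : ℕ) (a b : ℕ → ℂ) (τ : ℤ) : ℂ :=
  if 0 ≤ τ ∧ τ < (L : ℤ) then
    ∑ i ∈ Finset.range (L - τ.toNat), a (i + τ.toNat) * (starRingEnd ℂ) (b i)
  else if -(L : ℤ) < τ ∧ τ < 0 then
    ∑ i ∈ Finset.range (L - (-τ).toNat), a i * (starRingEnd ℂ) (b (i + (-τ).toNat))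
  else 0

/-- aperiodic autocorrelation. -/
noncomputable def aC (L : ℕ) (a : ℕ → ℂ) (τ : ℤ) : ℂ := cC L a a τ

lemma fiber_eq (L : ℕ) (τ : ℤ) (F : ℕ → ℕ → ℂ) :
    ∑ p ∈ (Finset.range L ×ˢ Finset.range L).filter (fun p => (p.1:ℤ) - p.2 = τ), F p.1 p.2 =
    if 0 ≤ τ then ∑ i ∈ Finset.range (L - τ.toNat), F (i + τ.toNat) i
    else ∑ i ∈ Finset.range (L - (-τ).toNat), F i (i + (-τ).toNat) := by
  split_ifs with h
  · refine Finset.sum_nbij' (fun p => p.2) (fun i => (i + τ.toNat, i)) ?_ ?_ ?_ ?_ ?_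
    · intro p hp
      simp only [Finset.mem_filter, Finset.mem_product, Finset.mem_range] at hp ⊢
      omega
    · intro i hi
      simp only [Finset.mem_filter, Finset.mem_product, Finset.mem_range] at hi ⊢
      omega
    · intro p hp
      simp only [Finset.mem_filter, Finset.mem_product, Finset.mem_range] at hp
      have : p.1 = p.2 + τ.toNat := by omega
      rw [Prod.ext_iff]; exact ⟨this.symm, rfl⟩
    · intro i hi; rfl
    · intro p hp
      simp only [Finset.mem_filter, Finset.mem_product, Finset.mem_range] at hp
      have : p.1 = p.2 + τ.toNat := by omega
      rw [this]
  · refine Finset.sum_nbij' (fun p => p.1) (fun i => (i, i + (-τ).toNat)) ?_ ?_ ?_ ?_ ?_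
    · intro p hp
      simp only [Finset.mem_filter, Finset.mem_product, Finset.mem_range] at hp ⊢
      omega
    · intro i hi
      simp only [Finset.mem_filter, Finset.mem_product, Finset.mem_range] at hi ⊢
      omega
    · intro p hp
      simp only [Finset.mem_filter, Finset.mem_product, Finset.mem_range] at hp
      have : p.2 = p.1 + (-τ).toNat := by omega
      rw [Prod.ext_iff]; exact ⟨rfl, this.symm⟩
    · intro i hi; rfl
    · intro p hp
      simp only [Finset.mem_filter, Finset.mem_product, Finset.mem_range] at hp
      have : p.2 = p.1 + (-τ).toNat := by omega
      rw [this]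

/-- If a unimodular sequence `a` of length `L = 2^m` lies in a complementary set of
size `n`, then its PMEPR is at most `n`, i.e. the instantaneous envelope power never
exceeds `n·L`. -/
theorem pmepr_le_of_mem_complementary_set (m n L : ℕ) (hL : L = 2 ^ m)
    (a : ℕ → ℂ) (b : Fin n → ℕ → ℂ)
    (hb : ∀ j, ∀ i < L, ‖b j i‖ = 1)
    (hCS0 : ∑ j, aC L (b j) 0 = (n : ℂ) * L)
    (hCS : ∀ τ : ℤ, τ ≠ 0 → ∑ j, aC L (b j) τ = 0)
    (j0 : Fin n) (hmem : ∀ i < L, b j0 i = a i) :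
    ∀ u ∈ Set.Ico (0 : ℝ) 1,
      ‖∑ j ∈ Finset.range L,
          a j * Complex.exp (2 * Real.pi * Complex.I * j * u)‖ ^ 2 ≤ n * L := by
  intro u _
  have hL1 : 1 ≤ L := hL ▸ Nat.one_le_two_pow
  set E : ℕ → ℂ := fun i => Complex.exp (2 * Real.pi * Complex.I * i * u) with hE
  set S : Fin n → ℂ := fun j => ∑ i ∈ Finset.range L, b j i * E i with hS
  -- conj of E
  have hEconj : ∀ i k : ℕ, E i * (starRingEnd ℂ) (E k)
      = Complex.exp (2 * Real.pi * Complex.I * ((i:ℂ) - k) * u) := by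
    intro i k
    rw [hE]
    simp only [← Complex.exp_conj, ← Complex.exp_add]
    congr 1
    have : (starRingEnd ℂ) (2 * (Real.pi:ℂ) * Complex.I * (k:ℂ) * (u:ℝ))
        = -(2 * (Real.pi:ℂ) * Complex.I * (k:ℂ) * (u:ℝ)) := by
      simp only [map_mul, Complex.conj_I, Complex.conj_ofReal, Complex.conj_natCast,
        Complex.conj_ofNat]
      ring
    rw [this]; ring
  -- main identity
  have keyC : ∑ j, S j * (starRingEnd ℂ) (S j) = (n : ℂ) * L := by
    have expand : ∀ j, S j * (starRingEnd ℂ) (S j)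
        = ∑ p ∈ Finset.range L ×ˢ Finset.range L,
            (b j p.1 * (starRingEnd ℂ) (b j p.2)) * (E p.1 * (starRingEnd ℂ) (E p.2)) := by
      intro j
      rw [hS, map_sum, Finset.sum_mul_sum, Finset.sum_product]
      refine Finset.sum_congr rfl fun i _ => Finset.sum_congr rfl fun k _ => ?_
      simp only [map_mul]; ring
    simp only [expand]
    rw [Finset.sum_comm]
    have hmaps : ∀ p ∈ Finset.range L ×ˢ Finset.range L,
        ((p.1:ℤ) - p.2) ∈ Finset.Icc (-(L:ℤ)+1) ((L:ℤ)-1) := by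
      intro p hp
      simp only [Finset.mem_product, Finset.mem_range] at hp
      simp only [Finset.mem_Icc]; omega
    rw [← Finset.sum_fiberwise_of_maps_to hmaps]
    have fiberval : ∀ τ ∈ Finset.Icc (-(L:ℤ)+1) ((L:ℤ)-1),
        (∑ p ∈ (Finset.range L ×ˢ Finset.range L).filter (fun p => (p.1:ℤ) - p.2 = τ),
          ∑ j, (b j p.1 * (starRingEnd ℂ) (b j p.2)) * (E p.1 * (starRingEnd ℂ) (E p.2)))
        = (∑ j, aC L (b j) τ) * Complex.exp (2 * Real.pi * Complex.I * (τ:ℂ) * u) := by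
      intro τ hτ
      simp only [Finset.mem_Icc] at hτ
      have step1 : ∀ p ∈ (Finset.range L ×ˢ Finset.range L).filter
          (fun p => (p.1:ℤ) - p.2 = τ),
          (∑ j, (b j p.1 * (starRingEnd ℂ) (b j p.2)) * (E p.1 * (starRingEnd ℂ) (E p.2)))
          = (∑ j, b j p.1 * (starRingEnd ℂ) (b j p.2))
              * Complex.exp (2 * Real.pi * Complex.I * (τ:ℂ) * u) := by
        intro p hp
        simp only [Finset.mem_filter] at hp
        have hpc : ((p.1:ℂ) - p.2) = (τ:ℂ) := by
          have := hp.2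
          push_cast [← this]
          ring
        rw [← Finset.sum_mul, hEconj, hpc]
      rw [Finset.sum_congr rfl step1, ← Finset.sum_mul]
      congr 1
      rw [fiber_eq L τ (fun x y => ∑ j, b j x * (starRingEnd ℂ) (b j y))]
      have swap : ∀ (s : Finset ℕ) (G : ℕ → Fin n → ℂ),
          ∑ i ∈ s, ∑ j, G i j = ∑ j, ∑ i ∈ s, G i j := fun s G => Finset.sum_comm
      split_ifs with h
      · rw [swap]
        refine Finset.sum_congr rfl fun j _ => ?_
        rw [aC, cC, if_pos ⟨h, by omega⟩]
      · rw [swap]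
        refine Finset.sum_congr rfl fun j _ => ?_
        rw [aC, cC, if_neg (by omega), if_pos ⟨by omega, by omega⟩]
    rw [Finset.sum_congr rfl fiberval]
    rw [Finset.sum_eq_single (0:ℤ)]
    · rw [hCS0]
      norm_num
    · intro τ _ hτ0
      rw [hCS τ hτ0, zero_mul]
    · intro h
      exact absurd (by simp only [Finset.mem_Icc]; omega) h
  -- from complex identity to real bound
  have keyR : ∑ j, Complex.normSq (S j) = (n : ℝ) * L := by
    have : ((∑ j, Complex.normSq (S j) : ℝ) : ℂ) = (((n:ℝ) * L : ℝ) : ℂ) := by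
      push_cast
      rw [← keyC]
      refine Finset.sum_congr rfl fun j _ => ?_
      rw [Complex.mul_conj]
    exact_mod_cast this
  have hrw : (∑ j ∈ Finset.range L, a j * Complex.exp (2 * Real.pi * Complex.I * j * u))
      = S j0 := by
    refine Finset.sum_congr rfl fun i hi => ?_
    rw [← hmem i (Finset.mem_range.mp hi)]
  rw [hrw, Complex.sq_norm]
  calc Complex.normSq (S j0) ≤ ∑ j, Complex.normSq (S j) :=
        Finset.single_le_sum (fun j _ => Complex.normSq_nonneg (S j)) (Finset.mem_univ j0)
    _ = (n : ℝ) * L := keyR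
end

section
/- Let f and g be generalized Boolean functions of m variables over Z_q, let x = (x_{j_0},...,x_{j_{k-1}}) be a tuple of restricted variables with binary restriction values c and d, and let y = (x_{i_0},...,x_{i_{l-1}}) be a further disjoint tuple of variables. Then the aperiodic cross-correlation of the restricted sequences decomposes as C(ψ(f|_{x=c}), ψ(g|_{x=d}))(τ) = Σ_{c1,c2 ∈ {0,1}^l} C(ψ(f|_{xy=c c1}), ψ(g|_{xy=d c2}))(τ). -/
open Complex Finset

open scoped Classical in
/-- the restricted sequence `ψ(f|P)`: the `i`-th entry is that of `ψ(f)` when the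
restriction predicate `P` holds at `i`, and `0` otherwise. -/
noncomputable def psiR (q m : ℕ) (f : (Fin m → ℕ) → ZMod q) (P : ℕ → Prop) : ℕ → ℂ :=
  fun i => if P i then wq q ^ (f (bitv m i)).val else 0

lemma cC_sum {ι κ : Type*} [Fintype ι] [Fintype κ] (L : ℕ) (A : ι → ℕ → ℂ)
    (B : κ → ℕ → ℂ) (τ : ℤ) :
    cC L (fun i => ∑ x, A x i) (fun i => ∑ y, B y i) τ
      = ∑ x, ∑ y, cC L (A x) (B y) τ := by
  unfold cC
  split_ifs with h1 h2
  · simp_rw [map_sum, Finset.sum_mul_sum]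
    rw [Finset.sum_comm]
    exact Finset.sum_congr rfl fun x _ => Finset.sum_comm
  · simp_rw [map_sum, Finset.sum_mul_sum]
    rw [Finset.sum_comm]
    exact Finset.sum_congr rfl fun x _ => Finset.sum_comm
  · simp

lemma psiR_sum (q m l : ℕ) (f : (Fin m → ℕ) → ZMod q) (Y : Fin l → Fin m)
    (P : ℕ → Prop) (i : ℕ) :
    psiR q m f P i
      = ∑ c1 : Fin l → Bool,
          psiR q m f (fun j => P j ∧ ∀ β, bitv m j (Y β) = (c1 β).toNat) i := by
  classical
  unfold psiR
  set b0 : Fin l → Bool := fun β => decide (bitv m i (Y β) = 1) with hb0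
  have hQ : ∀ β, bitv m i (Y β) = (b0 β).toNat := by
    intro β
    have h2 : bitv m i (Y β) < 2 := Nat.mod_lt _ (by norm_num)
    interval_cases h : bitv m i (Y β) <;> simp [hb0, h]
  rw [Finset.sum_eq_single b0]
  · by_cases hP : P i <;> simp [hP, hQ]
  · intro c1 _ hne
    have : ¬ (P i ∧ ∀ β, bitv m i (Y β) = (c1 β).toNat) := by
      rintro ⟨-, h⟩
      apply hne
      funext β
      have := (h β).symm.trans (hQ β)
      cases hc : c1 β <;> cases hd : b0 β <;> rw [hc, hd] at this <;>
        first | rfl | simp at this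
    simp [this]
  · simp

/-- Paterson's correlation decomposition lemma: the cross-correlation of two
restricted sequences splits as a sum over all further restrictions of a disjoint
tuple of variables. -/
theorem crossCorr_restriction_decomposition (q m k l : ℕ)
    (f g : (Fin m → ℕ) → ZMod q)
    (J : Fin k → Fin m) (hJ : Function.Injective J)
    (Y : Fin l → Fin m) (hY : Function.Injective Y)
    (hJY : ∀ α β, J α ≠ Y β)
    (c d : Fin k → Bool) (τ : ℤ) :
    cC (2 ^ m) (psiR q m f (fun i => ∀ α, bitv m i (J α) = (c α).toNat))
        (psiR q m g (fun i => ∀ α, bitv m i (J α) = (d α).toNat)) τ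
      = ∑ c1 : Fin l → Bool, ∑ c2 : Fin l → Bool,
          cC (2 ^ m)
            (psiR q m f (fun i => (∀ α, bitv m i (J α) = (c α).toNat) ∧
              ∀ β, bitv m i (Y β) = (c1 β).toNat))
            (psiR q m g (fun i => (∀ α, bitv m i (J α) = (d α).toNat) ∧
              ∀ β, bitv m i (Y β) = (c2 β).toNat)) τ := by
  rw [show psiR q m f (fun i => ∀ α, bitv m i (J α) = (c α).toNat)
      = fun i => ∑ c1 : Fin l → Bool,
          psiR q m f (fun j => (∀ α, bitv m j (J α) = (c α).toNat) ∧
            ∀ β, bitv m j (Y β) = (c1 β).toNat) i from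
        funext fun i => psiR_sum q m l f Y _ i,
      show psiR q m g (fun i => ∀ α, bitv m i (J α) = (d α).toNat)
      = fun i => ∑ c2 : Fin l → Bool,
          psiR q m g (fun j => (∀ α, bitv m j (J α) = (d α).toNat) ∧
            ∀ β, bitv m j (Y β) = (c2 β).toNat) i from
        funext fun i => psiR_sum q m l g Y _ i]
  exact cC_sum _ _ _ _
end

section
/- Let f: {0,1}^m → Z_q (q even) be a quadratic generalized Boolean function whose graph G(f) is a Hamiltonian path on the m variables with every edge of weight q/2. Then for any constants c, c' ∈ Z_q and with x_a an end vertex of the path, the pair of sequences (ψ(f + c), ψ(f + (q/2)x_a + c')) is a Golay complementary pair, i.e., A(ψ(f+c))(τ) + A(ψ(f+(q/2)x_a+c'))(τ) = 0 for all τ ≠ 0. -/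
open Complex Finset

/-- quadratic form of a path: `Σ_i x_{π(i)} x_{π(i+1)}` for a labelling
`π : Fin n → Fin m` of the path vertices. -/
def pathSum (m n : ℕ) (π : Fin n → Fin m) (x : Fin m → ℕ) : ℕ :=
  ∑ i : Fin n, if h : (i : ℕ) + 1 < n then x (π i) * x (π ⟨(i : ℕ) + 1, h⟩) else 0
noncomputable def chi (q : ℕ) (z : ZMod q) : ℂ := wq q ^ z.val

lemma wq_pow_q {q : ℕ} (hq0 : 0 < q) : wq q ^ q = 1 := by
  rw [wq, ← Complex.exp_nat_mul]
  have hq : (q : ℂ) ≠ 0 := Nat.cast_ne_zero.mpr hq0.ne'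
  have : (q : ℂ) * (2 * ↑Real.pi * Complex.I / ↑q) = 2 * ↑Real.pi * Complex.I := by
    field_simp
  rw [this, Complex.exp_two_pi_mul_I]

lemma wq_pow_mod {q : ℕ} (hq0 : 0 < q) (n : ℕ) : wq q ^ (n % q) = wq q ^ n := by
  conv_rhs => rw [← Nat.mod_add_div n q]
  rw [pow_add, pow_mul, wq_pow_q hq0, one_pow, mul_one]

lemma chi_add {q : ℕ} (hq0 : 0 < q) (x y : ZMod q) :
    chi q (x + y) = chi q x * chi q y := by
  have : NeZero q := ⟨hq0.ne'⟩
  rw [chi, chi, chi, ZMod.val_add, wq_pow_mod hq0, pow_add]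

lemma chi_zero {q : ℕ} (hq0 : 0 < q) : chi q 0 = 1 := by
  have : NeZero q := ⟨hq0.ne'⟩
  rw [chi, ZMod.val_zero, pow_zero]

lemma chi_mul_chi_neg {q : ℕ} (hq0 : 0 < q) (z : ZMod q) :
    chi q z * chi q (-z) = 1 := by
  rw [← chi_add hq0, add_neg_cancel, chi_zero hq0]

lemma chi_ne_zero {q : ℕ} (hq0 : 0 < q) (z : ZMod q) : chi q z ≠ 0 :=
  left_ne_zero_of_mul_eq_one (chi_mul_chi_neg hq0 z)

lemma conj_chi {q : ℕ} (hq0 : 0 < q) (z : ZMod q) :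
    (starRingEnd ℂ) (chi q z) = chi q (-z) := by
  have h1 : (starRingEnd ℂ) (wq q) = (wq q)⁻¹ := by
    rw [wq, ← Complex.exp_conj, ← Complex.exp_neg]
    congr 1
    simp [map_div₀, Complex.conj_I, map_ofNat]
    ring
  have hc : (starRingEnd ℂ) (chi q z) = (chi q z)⁻¹ := by
    rw [chi, map_pow, h1, inv_pow]
  rw [hc]
  exact inv_eq_of_mul_eq_one_right (chi_mul_chi_neg hq0 z)

lemma chi_q2 {q : ℕ} (hq : 2 ∣ q) (hq0 : 0 < q) :
    chi q (((q / 2 : ℕ) : ZMod q)) = -1 := by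
  have : NeZero q := ⟨hq0.ne'⟩
  obtain ⟨k, rfl⟩ := hq
  have hk : 0 < k := by omega
  have hv : (((2 * k / 2 : ℕ) : ZMod (2 * k))).val = k := by
    rw [Nat.mul_div_cancel_left _ (by norm_num), ZMod.val_natCast]
    exact Nat.mod_eq_of_lt (by omega)
  rw [chi, hv, wq, ← Complex.exp_nat_mul]
  have hk' : (k : ℂ) ≠ 0 := Nat.cast_ne_zero.mpr hk.ne'
  have : (k : ℂ) * (2 * ↑Real.pi * Complex.I / ↑(2 * k)) = ↑Real.pi * Complex.I := by
    push_cast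
    field_simp
  rw [this, Complex.exp_pi_mul_I]

lemma q2_add_q2 {q : ℕ} (hq : 2 ∣ q) : ((q / 2 : ℕ) : ZMod q) + ((q / 2 : ℕ) : ZMod q) = 0 := by
  rw [← Nat.cast_add]
  have : q / 2 + q / 2 = q := by omega
  rw [this, ZMod.natCast_self]

/-- flip bit `p` of `i` -/
def flp (p i : ℕ) : ℕ := if i / 2^p % 2 = 1 then i - 2^p else i + 2^p

lemma ge_of_bit_one {p i : ℕ} (h : i / 2^p % 2 = 1) : 2^p ≤ i := by
  by_contra hc
  push_neg at hc
  rw [Nat.div_eq_of_lt hc] at h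
  simp at h

lemma bit_add_pow (p : ℕ) {i : ℕ} (hb : i / 2^p % 2 = 0) (α : ℕ) :
    (i + 2^p) / 2^α % 2 = if α = p then 1 else i / 2^α % 2 := by
  rcases lt_trichotomy α p with h | h | h
  · rw [if_neg h.ne]
    have e : (2:ℕ)^p = 2^α * 2^(p-α) := by rw [← pow_add]; congr 1; omega
    rw [e, Nat.add_mul_div_left _ _ (Nat.two_pow_pos α)]
    have e2 : (2:ℕ)^(p-α) = 2 * 2^(p-α-1) := by rw [← pow_succ']; congr 1; omega
    rw [e2, Nat.add_mul_mod_self_left]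
  · subst h
    rw [if_pos rfl, Nat.add_div_right _ (Nat.two_pow_pos α)]
    omega
  · rw [if_neg (by omega)]
    have hr : i % 2^(p+1) < 2^p := by
      have e : (2:ℕ)^(p+1) = 2^p * 2 := by rw [pow_succ]
      rw [e, Nat.mod_mul, hb]
      have := Nat.mod_lt i (Nat.two_pow_pos p)
      omega
    have key : (i + 2^p) / 2^(p+1) = i / 2^(p+1) := by
      have hlt : (i % 2^(p+1) + 2^p) / 2^(p+1) = 0 :=
        Nat.div_eq_of_lt (by have e2 : (2:ℕ)^(p+1) = 2^p * 2 := pow_succ 2 p; omega)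
      conv_lhs => rw [← Nat.div_add_mod i (2^(p+1))]
      rw [add_assoc, Nat.mul_add_div (Nat.two_pow_pos _), hlt, add_zero]
    have e : (2:ℕ)^α = 2^(p+1) * 2^(α-p-1) := by rw [← pow_add]; congr 1; omega
    rw [e, ← Nat.div_div_eq_div_mul, ← Nat.div_div_eq_div_mul, key]

lemma flp_bit (p i α : ℕ) :
    flp p i / 2^α % 2 = if α = p then 1 - i / 2^α % 2 else i / 2^α % 2 := by
  rw [flp]
  rcases Nat.mod_two_eq_zero_or_one (i / 2^p) with hb | hb
  · rw [if_neg (by omega), bit_add_pow p hb α]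
    by_cases h : α = p
    · subst h; rw [if_pos rfl, if_pos rfl, hb]
    · rw [if_neg h, if_neg h]
  · rw [if_pos hb]
    have hge : 2^p ≤ i := ge_of_bit_one hb
    have hi' : (i - 2^p) + 2^p = i := by omega
    have hb' : (i - 2^p) / 2^p % 2 = 0 := by
      have e : i / 2^p = (i - 2^p) / 2^p + 1 := by
        conv_lhs => rw [← hi']
        rw [Nat.add_div_right _ (Nat.two_pow_pos p)]
      omega
    have hba := bit_add_pow p hb' α
    rw [hi'] at hba
    by_cases h : α = p
    · subst h; rw [if_pos rfl]; omega
    · rw [if_neg h]; rw [if_neg h] at hba; omega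

lemma flp_lt {m p i : ℕ} (hp : p < m) (hi : i < 2^m) : flp p i < 2^m := by
  rw [flp]
  split
  · have h2p := Nat.two_pow_pos p
    omega
  · rename_i h
    have hb : i / 2^p % 2 = 0 := by omega
    have hr : i % 2^(p+1) < 2^p := by
      have e : (2:ℕ)^(p+1) = 2^p * 2 := by rw [pow_succ]
      rw [e, Nat.mod_mul, hb]
      have := Nat.mod_lt i (Nat.two_pow_pos p)
      omega
    have e : (2:ℕ)^m = 2^(p+1) * 2^(m-p-1) := by rw [← pow_add]; congr 1; omega
    have hdm := Nat.div_add_mod i (2^(p+1))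
    have hq : i / 2^(p+1) < 2^(m-p-1) := by
      apply Nat.div_lt_of_lt_mul
      rw [← e]; exact hi
    have h1 : 2^(p+1) * (i / 2^(p+1) + 1) ≤ 2^(p+1) * 2^(m-p-1) :=
      Nat.mul_le_mul_left _ (by omega)
    rw [Nat.mul_add, mul_one] at h1
    have e2 : (2:ℕ)^(p+1) = 2 * 2^p := by rw [pow_succ, mul_comm]
    have hp1 : 0 < (2:ℕ)^(m-p-1) := Nat.two_pow_pos _
    omega

lemma flp_flp (p i : ℕ) : flp p (flp p i) = i := by
  have h := flp_bit p i p
  rw [if_pos rfl] at h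
  conv_lhs => rw [flp]
  rcases Nat.mod_two_eq_zero_or_one (i / 2^p) with hb | hb
  · rw [hb] at h
    rw [if_pos (by omega)]
    have : flp p i = i + 2^p := by rw [flp, if_neg (by omega)]
    omega
  · rw [hb] at h
    rw [if_neg (by omega)]
    have hge := ge_of_bit_one hb
    have : flp p i = i - 2^p := by rw [flp, if_pos hb]
    omega

lemma flp_add {p i t : ℕ} (h : i / 2^p % 2 = (i + t) / 2^p % 2) :
    flp p i + t = flp p (i + t) := by
  rw [flp, flp, ← h]
  rcases Nat.mod_two_eq_zero_or_one (i / 2^p) with hb | hb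
  · rw [hb]
    simp
    omega
  · rw [hb]
    have := ge_of_bit_one hb
    simp
    omega

lemma bitv_flp (m p i : ℕ) (α : Fin m) :
    bitv m (flp p i) α = if (α : ℕ) = p then 1 - bitv m i α else bitv m i α := by
  simpa [bitv] using flp_bit p i (α : ℕ)

lemma bitv_le_one (m i : ℕ) (α : Fin m) : bitv m i α ≤ 1 := by
  have := Nat.mod_lt (i / 2^(α:ℕ)) (show 0 < 2 by norm_num)
  simp [bitv]; omega

lemma bitv_inj {m i j : ℕ} (hi : i < 2^m) (hj : j < 2^m)
    (h : ∀ α : Fin m, bitv m i α = bitv m j α) : i = j := by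
  apply Nat.eq_of_testBit_eq
  intro n
  rcases lt_or_ge n m with hn | hn
  · have := h ⟨n, hn⟩
    simp only [bitv] at this
    rw [Nat.testBit_eq_decide_div_mod_eq, Nat.testBit_eq_decide_div_mod_eq, this]
  · have hle : (2:ℕ)^m ≤ 2^n := Nat.pow_le_pow_right (by norm_num) hn
    rw [Nat.testBit_lt_two_pow (lt_of_lt_of_le hi hle),
        Nat.testBit_lt_two_pow (lt_of_lt_of_le hj hle)]
/-- difference set of bit positions (in path order) where `i` and `i+t` differ -/
def Dset (m t : ℕ) (ρ : ℕ → Fin m) (i : ℕ) : Finset ℕ :=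
  (Finset.range m).filter (fun k => bitv m i (ρ k) ≠ bitv m (i+t) (ρ k))

noncomputable def posn (m t : ℕ) (ρ : ℕ → Fin m) (i : ℕ) : ℕ :=
  if h : (Dset m t ρ i).Nonempty then (Dset m t ρ i).min' h else 0

noncomputable def gfun (m t : ℕ) (ρ : ℕ → Fin m) (i : ℕ) : ℕ :=
  if bitv m i (ρ 0) = bitv m (i+t) (ρ 0) then flp ((ρ (posn m t ρ i - 1) : ℕ)) i else i

lemma Dset_mem {m t : ℕ} {ρ : ℕ → Fin m} {i k : ℕ} :
    k ∈ Dset m t ρ i ↔ k < m ∧ bitv m i (ρ k) ≠ bitv m (i+t) (ρ k) := by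
  simp [Dset, Finset.mem_filter, Finset.mem_range]

lemma Dset_nonempty {m t i : ℕ} {ρ : ℕ → Fin m}
    (hρinj : ∀ k l, k < m → l < m → ρ k = ρ l → k = l)
    (hi : i < 2^m) (hj : i + t < 2^m) (ht : 0 < t) : (Dset m t ρ i).Nonempty := by
  by_contra hne
  rw [Finset.not_nonempty_iff_eq_empty] at hne
  have hall : ∀ α : Fin m, bitv m i α = bitv m (i+t) α := by
    have hinj : Function.Injective (fun k : Fin m => ρ (k : ℕ)) := by
      intro k l h
      exact Fin.ext (hρinj _ _ k.isLt l.isLt h)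
    intro α
    obtain ⟨k, hk⟩ := Finite.injective_iff_surjective.mp hinj α
    by_contra hb
    have : (k : ℕ) ∈ Dset m t ρ i :=
      Dset_mem.mpr ⟨k.isLt, by rw [show ρ (k:ℕ) = α from hk]; exact hb⟩
    simp [hne] at this
  have := bitv_inj hi hj hall
  omega

lemma posn_spec {m t i : ℕ} {ρ : ℕ → Fin m} (h : (Dset m t ρ i).Nonempty) :
    posn m t ρ i ∈ Dset m t ρ i ∧ ∀ k ∈ Dset m t ρ i, posn m t ρ i ≤ k := by
  rw [posn, dif_pos h]
  exact ⟨Finset.min'_mem _ _, fun k hk => Finset.min'_le _ _ hk⟩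

lemma q2_mul_diff {q : ℕ} (hq : 2 ∣ q) {u v : ℕ} (hu : u ≤ 1) (hv : v ≤ 1) (huv : u ≠ v) :
    ((q/2 : ℕ) : ZMod q) * ((u : ZMod q) - (v : ZMod q)) = ((q/2 : ℕ) : ZMod q) := by
  interval_cases u <;> interval_cases v <;> simp_all
  linear_combination - q2_add_q2 hq

lemma q2_mul_diff2 {q : ℕ} (hq : 2 ∣ q) {b u v : ℕ} (hb : b ≤ 1) (hu : u ≤ 1) (hv : v ≤ 1)
    (huv : u ≠ v) :
    ((q/2 : ℕ) : ZMod q) *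
      (((1-b : ℕ) : ZMod q) * (v : ZMod q) - ((1-b : ℕ) : ZMod q) * (u : ZMod q)
        - (b : ZMod q) * (v : ZMod q) + (b : ZMod q) * (u : ZMod q))
      = ((q/2 : ℕ) : ZMod q) := by
  interval_cases b <;> interval_cases u <;> interval_cases v <;> simp_all
  · linear_combination - q2_add_q2 hq
  · linear_combination - q2_add_q2 hq

lemma chi_sub {q : ℕ} (hq0 : 0 < q) (A B : ZMod q) :
    chi q A * (starRingEnd ℂ) (chi q B) = chi q (A - B) := by
  rw [conj_chi hq0, ← chi_add hq0, sub_eq_add_neg]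
lemma master {q m : ℕ} (hq : 2 ∣ q) (hm : 0 < m) {ρ : ℕ → Fin m}
    (hρinj : ∀ k l, k < m → l < m → ρ k = ρ l → k = l)
    {g : Fin m → ZMod q} {g' : ZMod q} {f : (Fin m → ℕ) → ZMod q}
    (hf : ∀ x : Fin m → ℕ, (∀ v, x v ≤ 1) →
      f x = ((q/2 : ℕ) : ZMod q)
          * (∑ k ∈ Finset.range (m-1), (x (ρ k) : ZMod q) * (x (ρ (k+1)) : ZMod q))
        + (∑ v : Fin m, g v * (x v : ZMod q)) + g')
    {t i : ℕ} (ht : 0 < t) (hj : i + t < 2^m)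
    (heq : bitv m i (ρ 0) = bitv m (i+t) (ρ 0)) :
    ∃ p, p < m ∧ gfun m t ρ i = flp p i ∧ flp p i + t = flp p (i+t) ∧
      gfun m t ρ (flp p i) = i ∧
      bitv m (flp p i) (ρ 0) = bitv m (flp p i + t) (ρ 0) ∧
      f (bitv m (flp p (i+t))) - f (bitv m (flp p i))
        = f (bitv m (i+t)) - f (bitv m i) + ((q/2 : ℕ) : ZMod q) := by
  have hi : i < 2^m := by omega
  have hDne := Dset_nonempty hρinj hi hj ht
  obtain ⟨hmem, hmin⟩ := posn_spec hDne
  set k0 : ℕ := posn m t ρ i with hk0def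
  obtain ⟨hk0m, hk0d⟩ := Dset_mem.mp hmem
  have hagree : ∀ k, k < k0 → k < m → bitv m i (ρ k) = bitv m (i+t) (ρ k) := by
    intro k hk hkm
    by_contra hb
    exact absurd (hmin k (Dset_mem.mpr ⟨hkm, hb⟩)) (by omega)
  have hk01 : 1 ≤ k0 := by
    rcases Nat.eq_zero_or_pos k0 with h0 | h
    · rw [h0] at hk0d; exact absurd heq hk0d
    · exact h
  have hpm : ((ρ (k0 - 1)) : ℕ) < m := (ρ (k0-1)).isLt
  have hcomm : flp ((ρ (k0-1)) : ℕ) i + t = flp ((ρ (k0-1)) : ℕ) (i+t) :=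
    flp_add (hagree (k0-1) (by omega) (by omega))
  have heq' : bitv m (flp ((ρ (k0-1)):ℕ) i) (ρ 0) = bitv m (flp ((ρ (k0-1)):ℕ) i + t) (ρ 0) := by
    rw [hcomm, bitv_flp, bitv_flp]
    split_ifs
    · rw [heq]
    · exact heq
  have hDeq : Dset m t ρ (flp ((ρ (k0-1)):ℕ) i) = Dset m t ρ i := by
    ext k
    rw [Dset_mem, Dset_mem, hcomm, bitv_flp, bitv_flp]
    refine and_congr_right fun _ => ?_
    have hA := bitv_le_one m i (ρ k)
    have hB := bitv_le_one m (i+t) (ρ k)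
    split_ifs with hc
    · constructor <;> { intro hne heq2; apply hne; omega }
    · exact Iff.rfl
  have hginv : gfun m t ρ (flp ((ρ (k0-1)):ℕ) i) = i := by
    rw [gfun, if_pos heq']
    have hposeq : posn m t ρ (flp ((ρ (k0-1)):ℕ) i) = posn m t ρ i := by
      rw [posn, posn, hDeq]
    rw [hposeq, ← hk0def]
    exact flp_flp _ i
  have hdelta : f (bitv m (flp ((ρ (k0-1)):ℕ) (i+t))) - f (bitv m (flp ((ρ (k0-1)):ℕ) i))
      = f (bitv m (i+t)) - f (bitv m i) + ((q/2 : ℕ) : ZMod q) := by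
    rw [hf (bitv m (flp ((ρ (k0-1)):ℕ) (i+t))) (fun v => bitv_le_one _ _ v),
        hf (bitv m (flp ((ρ (k0-1)):ℕ) i)) (fun v => bitv_le_one _ _ v),
        hf (bitv m (i+t)) (fun v => bitv_le_one _ _ v),
        hf (bitv m i) (fun v => bitv_le_one _ _ v)]
    have hL : (∑ v : Fin m, g v * (bitv m (flp ((ρ (k0-1)):ℕ) (i+t)) v : ZMod q))
            - (∑ v : Fin m, g v * (bitv m (flp ((ρ (k0-1)):ℕ) i) v : ZMod q))
            - (∑ v : Fin m, g v * (bitv m (i+t) v : ZMod q))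
            + (∑ v : Fin m, g v * (bitv m i v : ZMod q)) = 0 := by
      rw [← Finset.sum_sub_distrib, ← Finset.sum_sub_distrib, ← Finset.sum_add_distrib]
      apply Finset.sum_eq_zero
      intro v _
      simp only [bitv_flp]
      by_cases hv : (v : ℕ) = ((ρ (k0-1)):ℕ)
      · simp only [if_pos hv]
        have hvv : bitv m i v = bitv m (i+t) v := by
          rw [show v = ρ (k0-1) from Fin.ext hv]
          exact hagree (k0-1) (by omega) (by omega)
        rw [hvv]
        ring
      · simp only [if_neg hv]
        ring
    have hQ : ((q/2:ℕ):ZMod q) * (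
          (∑ k ∈ Finset.range (m-1), (bitv m (flp ((ρ (k0-1)):ℕ) (i+t)) (ρ k) : ZMod q)
              * (bitv m (flp ((ρ (k0-1)):ℕ) (i+t)) (ρ (k+1)) : ZMod q))
        - (∑ k ∈ Finset.range (m-1), (bitv m (flp ((ρ (k0-1)):ℕ) i) (ρ k) : ZMod q)
              * (bitv m (flp ((ρ (k0-1)):ℕ) i) (ρ (k+1)) : ZMod q))
        - (∑ k ∈ Finset.range (m-1), (bitv m (i+t) (ρ k) : ZMod q) * (bitv m (i+t) (ρ (k+1)) : ZMod q))
        + (∑ k ∈ Finset.range (m-1), (bitv m i (ρ k) : ZMod q) * (bitv m i (ρ (k+1)) : ZMod q)))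
        = ((q/2:ℕ):ZMod q) := by
      rw [← Finset.sum_sub_distrib, ← Finset.sum_sub_distrib, ← Finset.sum_add_distrib]
      have hmem' : k0 - 1 ∈ Finset.range (m-1) := by
        rw [Finset.mem_range]; omega
      refine Eq.trans (congrArg (fun z => ((q/2:ℕ):ZMod q) * z)
        (Finset.sum_eq_single_of_mem (k0-1) hmem' ?_)) ?_
      · intro b hb hbne
        rw [Finset.mem_range] at hb
        have hbne' : ((ρ b : ℕ)) ≠ ((ρ (k0-1) : ℕ)) :=
          fun hcon => hbne (hρinj b (k0-1) (by omega) (by omega) (Fin.ext hcon))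
        simp only [bitv_flp, if_neg hbne']
        by_cases hb1 : ((ρ (b+1) : ℕ)) = ((ρ (k0-1)):ℕ)
        · have hb1' : b + 1 = k0 - 1 := hρinj (b+1) (k0-1) (by omega) (by omega) (Fin.ext hb1)
          simp only [if_pos hb1]
          have h1 : bitv m i (ρ b) = bitv m (i+t) (ρ b) := hagree b (by omega) (by omega)
          have h2 : bitv m i (ρ (b+1)) = bitv m (i+t) (ρ (b+1)) :=
            hagree (b+1) (by omega) (by omega)
          rw [h1, h2]
          ring
        · simp only [if_neg hb1]
          ring
      · have hsucc : k0 - 1 + 1 = k0 := by omega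
        have hne2 : ((ρ k0 : ℕ)) ≠ ((ρ (k0-1)):ℕ) :=
          fun hcon => absurd (hρinj k0 (k0-1) (by omega) (by omega) (Fin.ext hcon)) (by omega)
        simp only [bitv_flp, hsucc]
        rw [if_true, if_true, if_neg hne2, if_neg hne2]
        have h1 : bitv m i (ρ (k0-1)) = bitv m (i+t) (ρ (k0-1)) :=
          hagree (k0-1) (by omega) (by omega)
        rw [← h1]
        exact q2_mul_diff2 hq (bitv_le_one _ _ _) (bitv_le_one _ _ _) (bitv_le_one _ _ _) hk0d
    linear_combination hQ + hL
  exact ⟨((ρ (k0 - 1)) : ℕ), (ρ (k0-1)).isLt, by rw [gfun, if_pos heq, ← hk0def],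
    hcomm, hginv, heq', hdelta⟩
lemma golay_key (q m : ℕ) (hq : 2 ∣ q) (hq0 : 0 < q) (hm : 0 < m)
    (ρ : ℕ → Fin m) (hρinj : ∀ k l, k < m → l < m → ρ k = ρ l → k = l)
    (g : Fin m → ZMod q) (g' c c' : ZMod q) (f : (Fin m → ℕ) → ZMod q)
    (hf : ∀ x : Fin m → ℕ, (∀ v, x v ≤ 1) →
      f x = ((q/2 : ℕ) : ZMod q)
          * (∑ k ∈ Finset.range (m-1), (x (ρ k) : ZMod q) * (x (ρ (k+1)) : ZMod q))
        + (∑ v : Fin m, g v * (x v : ZMod q)) + g')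
    (t : ℕ) (ht : 0 < t) :
    ∑ i ∈ Finset.range (2^m - t),
      (chi q (f (bitv m (i+t)) + c) * (starRingEnd ℂ) (chi q (f (bitv m i) + c))
        + chi q (f (bitv m (i+t)) + ((q/2 : ℕ) : ZMod q) * (bitv m (i+t) (ρ 0) : ZMod q) + c')
          * (starRingEnd ℂ)
              (chi q (f (bitv m i) + ((q/2 : ℕ) : ZMod q) * (bitv m i (ρ 0) : ZMod q) + c')))
      = 0 := by
  set S : ℕ → ℂ := fun i =>
      chi q (f (bitv m (i+t)) + c) * (starRingEnd ℂ) (chi q (f (bitv m i) + c))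
        + chi q (f (bitv m (i+t)) + ((q/2 : ℕ) : ZMod q) * (bitv m (i+t) (ρ 0) : ZMod q) + c')
          * (starRingEnd ℂ)
              (chi q (f (bitv m i) + ((q/2 : ℕ) : ZMod q) * (bitv m i (ρ 0) : ZMod q) + c'))
    with hSdef
  have hT0 : ∀ i : ℕ, bitv m i (ρ 0) ≠ bitv m (i+t) (ρ 0) → S i = 0 := by
    intro i hca
    rw [hSdef]
    dsimp only
    rw [chi_sub hq0, chi_sub hq0]
    rw [show f (bitv m (i + t)) + c - (f (bitv m i) + c)
        = f (bitv m (i+t)) - f (bitv m i) from by ring]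
    rw [show f (bitv m (i + t)) + ((q/2:ℕ):ZMod q) * (bitv m (i+t) (ρ 0) : ZMod q) + c'
          - (f (bitv m i) + ((q/2:ℕ):ZMod q) * (bitv m i (ρ 0) : ZMod q) + c')
        = f (bitv m (i+t)) - f (bitv m i)
          + ((q/2:ℕ):ZMod q) * ((bitv m (i+t) (ρ 0) : ZMod q) - (bitv m i (ρ 0) : ZMod q))
        from by ring]
    rw [q2_mul_diff hq (bitv_le_one _ _ _) (bitv_le_one _ _ _) (Ne.symm hca)]
    rw [chi_add hq0, chi_q2 hq hq0]
    ring
  have hTpair : ∀ i : ℕ, i + t < 2^m → bitv m i (ρ 0) = bitv m (i+t) (ρ 0) →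
      S i + S (gfun m t ρ i) = 0 := by
    intro i hjlt hca
    obtain ⟨p, hpm, hgf, hcomm, hginv, heq', hdelta⟩ := master hq hm hρinj hf ht hjlt hca
    rw [hgf, hSdef]
    dsimp only
    rw [hcomm]
    have heq2 : bitv m (flp p i) (ρ 0) = bitv m (flp p (i+t)) (ρ 0) := by
      rw [← hcomm]; exact heq'
    rw [chi_sub hq0, chi_sub hq0, chi_sub hq0, chi_sub hq0]
    rw [show f (bitv m (i + t)) + c - (f (bitv m i) + c)
        = f (bitv m (i+t)) - f (bitv m i) from by ring]
    rw [show f (bitv m (i + t)) + ((q/2:ℕ):ZMod q) * (bitv m (i+t) (ρ 0) : ZMod q) + c'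
          - (f (bitv m i) + ((q/2:ℕ):ZMod q) * (bitv m i (ρ 0) : ZMod q) + c')
        = f (bitv m (i+t)) - f (bitv m i) from by rw [hca]; ring]
    rw [show f (bitv m (flp p (i + t))) + c - (f (bitv m (flp p i)) + c)
        = f (bitv m (i+t)) - f (bitv m i) + ((q/2:ℕ):ZMod q) from by rw [← hdelta]; ring]
    rw [show f (bitv m (flp p (i + t)))
            + ((q/2:ℕ):ZMod q) * (bitv m (flp p (i+t)) (ρ 0) : ZMod q) + c'
          - (f (bitv m (flp p i)) + ((q/2:ℕ):ZMod q) * (bitv m (flp p i) (ρ 0) : ZMod q) + c')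
        = f (bitv m (i+t)) - f (bitv m i) + ((q/2:ℕ):ZMod q) from by
          rw [heq2, ← hdelta]; ring]
    rw [chi_add hq0, chi_q2 hq hq0]
    ring
  apply Finset.sum_involution (fun i _ => gfun m t ρ i)
  · intro i hi
    show S i + S (gfun m t ρ i) = 0
    by_cases hca : bitv m i (ρ 0) = bitv m (i+t) (ρ 0)
    · exact hTpair i (by rw [Finset.mem_range] at hi; omega) hca
    · rw [show gfun m t ρ i = i from by rw [gfun, if_neg hca], hT0 i hca]
      norm_num
  · intro i hi hne
    show gfun m t ρ i ≠ i
    by_cases hca : bitv m i (ρ 0) = bitv m (i+t) (ρ 0)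
    · obtain ⟨p, hpm, hgf, hcomm, hginv, heq', hdelta⟩ := master hq hm hρinj hf ht
        (by rw [Finset.mem_range] at hi; omega) hca
      rw [hgf]
      intro hcon
      have hb := flp_bit p i p
      rw [if_pos rfl, hcon] at hb
      omega
    · exact absurd (hT0 i hca) hne
  · intro i hi
    show gfun m t ρ i ∈ Finset.range (2^m - t)
    rw [Finset.mem_range] at hi ⊢
    by_cases hca : bitv m i (ρ 0) = bitv m (i+t) (ρ 0)
    · obtain ⟨p, hpm, hgf, hcomm, hginv, heq', hdelta⟩ := master hq hm hρinj hf ht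
        (by omega) hca
      rw [hgf]
      have := flp_lt (m := m) hpm (show i + t < 2^m by omega)
      rw [← hcomm] at this
      omega
    · rw [gfun, if_neg hca]
      omega
  · intro i hi
    show gfun m t ρ (gfun m t ρ i) = i
    by_cases hca : bitv m i (ρ 0) = bitv m (i+t) (ρ 0)
    · obtain ⟨p, hpm, hgf, hcomm, hginv, heq', hdelta⟩ := master hq hm hρinj hf ht
        (by rw [Finset.mem_range] at hi; omega) hca
      rw [hgf]
      exact hginv
    · have hgid : gfun m t ρ i = i := by rw [gfun, if_neg hca]
      rw [hgid, hgid]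
lemma pathSum_forward (m : ℕ) (hm : 0 < m) (π : Equiv.Perm (Fin m)) (x : Fin m → ℕ) :
    pathSum m m ⇑π x = ∑ k ∈ Finset.range (m-1),
      x (π ⟨k % m, Nat.mod_lt _ hm⟩) * x (π ⟨(k+1) % m, Nat.mod_lt _ hm⟩) := by
  rw [pathSum]
  have h1 : ∀ i : Fin m,
      (if h : (i:ℕ)+1 < m then x (π i) * x (π ⟨(i:ℕ)+1, h⟩) else 0)
      = (fun k : ℕ => if k+1 < m then
          x (π ⟨k % m, Nat.mod_lt _ hm⟩) * x (π ⟨(k+1) % m, Nat.mod_lt _ hm⟩) else 0) (i:ℕ) := by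
    intro i
    by_cases h : (i:ℕ)+1 < m
    · rw [dif_pos h]
      simp only [if_pos h]
      have e1 : π i = π ⟨(i:ℕ) % m, Nat.mod_lt _ hm⟩ := by
        congr 1
        exact Fin.ext (Nat.mod_eq_of_lt i.isLt).symm
      have e2 : π ⟨(i:ℕ)+1, h⟩ = π ⟨((i:ℕ)+1) % m, Nat.mod_lt _ hm⟩ := by
        congr 1
        exact Fin.ext (Nat.mod_eq_of_lt h).symm
      rw [e1, e2]
    · rw [dif_neg h]
      simp only [if_neg h]
  rw [Finset.sum_congr rfl (fun i _ => h1 i)]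
  rw [Fin.sum_univ_eq_sum_range (fun k : ℕ => if k+1 < m then
      x (π ⟨k % m, Nat.mod_lt _ hm⟩) * x (π ⟨(k+1) % m, Nat.mod_lt _ hm⟩) else 0) m]
  have hsplit := Finset.sum_range_succ (fun k : ℕ => if k+1 < m then
      x (π ⟨k % m, Nat.mod_lt _ hm⟩) * x (π ⟨(k+1) % m, Nat.mod_lt _ hm⟩) else 0) (m-1)
  rw [show m - 1 + 1 = m from by omega] at hsplit
  rw [hsplit, if_neg (by omega), add_zero]
  apply Finset.sum_congr rfl
  intro k hk
  rw [Finset.mem_range] at hk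
  rw [if_pos (by omega)]

lemma pathSum_reverse (m : ℕ) (hm : 0 < m) (π : Equiv.Perm (Fin m)) (x : Fin m → ℕ) :
    pathSum m m ⇑π x = ∑ k ∈ Finset.range (m-1),
      x (π ⟨(m-1-k) % m, Nat.mod_lt _ hm⟩) * x (π ⟨(m-1-(k+1)) % m, Nat.mod_lt _ hm⟩) := by
  rw [pathSum_forward m hm π x, ← Finset.sum_range_reflect]
  apply Finset.sum_congr rfl
  intro k hk
  rw [Finset.mem_range] at hk
  rw [show m-1-1-k = m-1-(k+1) from by omega]
  rw [show m-1-(k+1)+1 = m-1-k from by omega]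
  exact Nat.mul_comm _ _

/-- Davis–Jedwab: if the graph of the quadratic GBF `f` is a Hamiltonian path on the
`m` variables with every edge weighted `q/2`, then for any constants `c, c'` the pair
`(ψ(f + c), ψ(f + (q/2)x_a + c'))`, where `x_a` is an end vertex of the path, is a
Golay complementary pair. -/
theorem golay_pair_of_path (q m : ℕ) (hq : 2 ∣ q) (hq0 : 0 < q) (hm : 0 < m)
    (π : Equiv.Perm (Fin m)) (g : Fin m → ZMod q) (g' c c' : ZMod q)
    (f : (Fin m → ℕ) → ZMod q)
    (hf : ∀ x : Fin m → ℕ, (∀ i, x i ≤ 1) →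
      f x = ((q / 2 * pathSum m m (π : Fin m → Fin m) x : ℕ) : ZMod q)
        + ∑ i : Fin m, g i * (x i : ZMod q) + g')
    (a : Fin m) (ha : a = π ⟨0, hm⟩ ∨ a = π ⟨m - 1, by omega⟩) :
    ∀ τ : ℤ, τ ≠ 0 →
      aC (2 ^ m) (psi q m (fun x => f x + c)) τ
        + aC (2 ^ m) (psi q m (fun x => f x + ((q / 2 : ℕ) : ZMod q) * (x a : ZMod q) + c')) τ
      = 0 := by
  obtain ⟨ρ, hρ0, hρinj, hfρ⟩ : ∃ ρ : ℕ → Fin m, ρ 0 = a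
      ∧ (∀ k l, k < m → l < m → ρ k = ρ l → k = l)
      ∧ ∀ x : Fin m → ℕ, (∀ v, x v ≤ 1) →
        f x = ((q/2 : ℕ) : ZMod q)
            * (∑ k ∈ Finset.range (m-1), (x (ρ k) : ZMod q) * (x (ρ (k+1)) : ZMod q))
          + (∑ v : Fin m, g v * (x v : ZMod q)) + g' := by
    rcases ha with ha | ha
    · refine ⟨fun k => π ⟨k % m, Nat.mod_lt _ hm⟩, ?_, ?_, ?_⟩
      · rw [ha]
        exact congrArg π (Fin.ext (show (0:ℕ) % m = 0 from Nat.zero_mod m))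
      · intro k l hk hl hkl
        have := π.injective hkl
        rw [Fin.mk.injEq, Nat.mod_eq_of_lt hk, Nat.mod_eq_of_lt hl] at this
        exact this
      · intro x hx
        rw [hf x hx, pathSum_forward m hm π x]
        push_cast
        ring
    · refine ⟨fun k => π ⟨(m-1-k) % m, Nat.mod_lt _ hm⟩, ?_, ?_, ?_⟩
      · rw [ha]
        exact congrArg π (Fin.ext (show (m-1) % m = m-1 from Nat.mod_eq_of_lt (by omega)))
      · intro k l hk hl hkl
        have := π.injective hkl
        rw [Fin.mk.injEq, Nat.mod_eq_of_lt (by omega), Nat.mod_eq_of_lt (by omega)] at this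
        omega
      · intro x hx
        rw [hf x hx, pathSum_reverse m hm π x]
        push_cast
        ring
  intro τ hτ
  have hpos : ∀ t : ℕ, 0 < t →
      ∑ i ∈ Finset.range (2^m - t),
        (psi q m (fun x => f x + c) (i+t)
            * (starRingEnd ℂ) (psi q m (fun x => f x + c) i)
          + psi q m (fun x => f x + ((q/2 : ℕ) : ZMod q) * (x a : ZMod q) + c') (i+t)
            * (starRingEnd ℂ)
                (psi q m (fun x => f x + ((q/2 : ℕ) : ZMod q) * (x a : ZMod q) + c') i))
        = 0 := by
    intro t ht
    have hk := golay_key q m hq hq0 hm ρ hρinj g g' c c' f hfρ t ht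
    rw [hρ0] at hk
    exact hk
  by_cases h1 : 0 ≤ τ ∧ τ < ((2^m : ℕ) : ℤ)
  · rw [aC, aC, cC, cC, if_pos h1, if_pos h1, ← Finset.sum_add_distrib]
    exact hpos τ.toNat (by omega)
  · by_cases h2 : -((2^m : ℕ) : ℤ) < τ ∧ τ < 0
    · rw [aC, aC, cC, cC, if_neg h1, if_pos h2, if_neg h1, if_pos h2, ← Finset.sum_add_distrib]
      have h0 := hpos (-τ).toNat (by omega)
      calc ∑ i ∈ Finset.range (2^m - (-τ).toNat),
            (psi q m (fun x => f x + c) i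
                * (starRingEnd ℂ) (psi q m (fun x => f x + c) (i + (-τ).toNat))
              + psi q m (fun x => f x + ((q/2 : ℕ) : ZMod q) * (x a : ZMod q) + c') i
                * (starRingEnd ℂ)
                    (psi q m (fun x => f x + ((q/2 : ℕ) : ZMod q) * (x a : ZMod q) + c')
                      (i + (-τ).toNat)))
          = (starRingEnd ℂ) (∑ i ∈ Finset.range (2^m - (-τ).toNat),
            (psi q m (fun x => f x + c) (i + (-τ).toNat)
                * (starRingEnd ℂ) (psi q m (fun x => f x + c) i)
              + psi q m (fun x => f x + ((q/2 : ℕ) : ZMod q) * (x a : ZMod q) + c') (i + (-τ).toNat)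
                * (starRingEnd ℂ)
                    (psi q m (fun x => f x + ((q/2 : ℕ) : ZMod q) * (x a : ZMod q) + c') i))) := by
            rw [map_sum]
            apply Finset.sum_congr rfl
            intro i _
            simp only [map_add, map_mul, Complex.conj_conj]
            ring
        _ = 0 := by rw [h0, map_zero]
    · rw [aC, aC, cC, cC, if_neg h1, if_neg h2, if_neg h1, if_neg h2]
      norm_num
end

section
/- Let f: {0,1}^m → Z_q (q even) be a quadratic generalized Boolean function such that deleting k distinct vertices x_{j_0},...,x_{j_{k-1}} from G(f) (together with their edges) leaves a path on the remaining m-k vertices with all edges of weight q/2, and let x_a be an end vertex of this path. Then the set { ψ(f + (q/2)(Σ_{α=0}^{k-1} d_α x_{j_α} + d x_a)) : d_α, d ∈ {0,1} } is a complementary set of size 2^{k+1}. -/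
open Complex Finset

namespace PT12

/-- decomposed number with bit `b` at position `u` -/
def X (u A b r : ℕ) : ℕ := A * 2 ^ (u+1) + b * 2 ^ u + r

lemma decomp (u i : ℕ) : i = X u (i / 2^(u+1)) (i / 2^u % 2) (i % 2^u) := by
  unfold X
  have h1 : i = 2^u * (i / 2^u) + i % 2^u := (Nat.div_add_mod _ _).symm
  have h2 : i / 2^u = 2 * (i / 2^(u+1)) + i / 2^u % 2 := by
    rw [pow_succ, ← Nat.div_div_eq_div_mul]
    exact (Nat.div_add_mod _ _).symm
  calc i = 2^u * (i / 2^u) + i % 2^u := h1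
    _ = 2^u * (2 * (i / 2^(u+1)) + i / 2^u % 2) + i % 2^u := by rw [← h2]
    _ = _ := by ring

lemma bit_X_self (u A b r : ℕ) (hb : b < 2) (hr : r < 2^u) :
    X u A b r / 2^u % 2 = b := by
  unfold X
  have h : A * 2 ^ (u+1) + b * 2 ^ u + r = r + 2^u * (2 * A + b) := by ring
  rw [h, Nat.add_mul_div_left _ _ (Nat.two_pow_pos u),
    Nat.div_eq_of_lt hr, Nat.zero_add, Nat.add_comm, Nat.add_mul_mod_self_left,
    Nat.mod_eq_of_lt hb]

lemma bit_X_ne (u A b r α : ℕ) (hb : b < 2) (hr : r < 2^u) (hne : α ≠ u) :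
    X u A b r / 2^α % 2 = X u A 0 r / 2^α % 2 := by
  rcases Nat.lt_or_ge α u with h | h
  · -- α < u : bit depends only on r
    have key : ∀ c : ℕ, (c * 2^(α+1) + r) / 2^α % 2 = (r / 2^α) % 2 := by
      intro c
      have : c * 2^(α+1) + r = r + 2^α * (2 * c) := by ring
      rw [this, Nat.add_mul_div_left _ _ (Nat.two_pow_pos α),
        Nat.add_mul_mod_self_left]
    have e1 : X u A b r = (A * 2^(u-α) + b * 2^(u-α-1)) * 2^(α+1) + r := by
      unfold X
      have h1 : 2^(u-α) * 2^(α+1) = 2^(u+1) := by rw [← pow_add]; congr 1; omega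
      have h2 : 2^(u-α-1) * 2^(α+1) = 2^u := by rw [← pow_add]; congr 1; omega
      calc A * 2^(u+1) + b * 2^u + r
          = A * (2^(u-α) * 2^(α+1)) + b * (2^(u-α-1) * 2^(α+1)) + r := by rw [h1, h2]
        _ = _ := by ring
    have e2 : X u A 0 r = (A * 2^(u-α) + 0 * 2^(u-α-1)) * 2^(α+1) + r := by
      unfold X
      have h1 : 2^(u-α) * 2^(α+1) = 2^(u+1) := by rw [← pow_add]; congr 1; omega
      calc A * 2^(u+1) + 0 * 2^u + r
          = A * (2^(u-α) * 2^(α+1)) + 0 + r := by rw [h1]; ring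
        _ = _ := by ring
    rw [e1, e2, key, key]
  · -- α > u : bit depends only on A
    have hα : u + 1 ≤ α := by omega
    have key : ∀ b' : ℕ, b' < 2 → X u A b' r / 2^α = A / 2^(α - (u+1)) := by
      intro b' hb'
      have hsmall : b' * 2^u + r < 2^(u+1) := by
        have : b' * 2^u ≤ 2^u := by nlinarith [Nat.two_pow_pos u]
        have : 2^(u+1) = 2^u + 2^u := by ring
        omega
      have e : X u A b' r / 2^(u+1) = A := by
        unfold X
        rw [Nat.add_assoc, Nat.add_comm, Nat.add_mul_div_right _ _ (Nat.two_pow_pos (u+1)),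
          Nat.div_eq_of_lt hsmall, Nat.zero_add]
      have : (2:ℕ)^α = 2^(u+1) * 2^(α - (u+1)) := by rw [← pow_add]; congr 1; omega
      rw [this, ← Nat.div_div_eq_div_mul, e]
    rw [key b hb, key 0 (by norm_num)]

lemma X_lt (u A r m : ℕ) (hr : r < 2^u) (hu : u < m) (h0 : X u A 0 r < 2^m) :
    X u A 1 r < 2^m := by
  unfold X at *
  have hA : A * 2^(u+1) < 2^m := by omega
  have hpow : (2:ℕ)^m = 2^(m - (u+1)) * 2^(u+1) := by rw [← pow_add]; congr 1; omega
  have hA2 : A < 2^(m-(u+1)) := by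
    by_contra hc
    push_neg at hc
    have : 2^(m-(u+1)) * 2^(u+1) ≤ A * 2^(u+1) := by
      exact Nat.mul_le_mul_right _ hc
    omega
  have : A + 1 ≤ 2^(m-(u+1)) := hA2
  have : (A+1) * 2^(u+1) ≤ 2^(m-(u+1)) * 2^(u+1) := Nat.mul_le_mul_right _ this
  have h2 : (2:ℕ)^(u+1) = 2^u + 2^u := by ring
  nlinarith

/-- flip bit `u` of `i` -/
def flipN (u i : ℕ) : ℕ := if i / 2^u % 2 = 0 then i + 2^u else i - 2^u

lemma flip_X (u A b r : ℕ) (hb : b < 2) (hr : r < 2^u) :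
    flipN u (X u A b r) = X u A (1-b) r := by
  unfold flipN
  rw [bit_X_self u A b r hb hr]
  rcases (by omega : b = 0 ∨ b = 1) with rfl | rfl
  · rw [if_pos rfl]; unfold X; ring
  · rw [if_neg one_ne_zero]
    have h1 : X u A 1 r = X u A 0 r + 2^u := by unfold X; ring
    have h0 : (1:ℕ) - 1 = 0 := rfl
    rw [h1, Nat.add_sub_cancel, h0]

lemma bit_lt_two (u i : ℕ) : i / 2^u % 2 < 2 := Nat.mod_lt _ (by norm_num)

lemma flip_eq_X (u i : ℕ) : flipN u i = X u (i / 2^(u+1)) (1 - i / 2^u % 2) (i % 2^u) := by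
  conv_lhs => rw [decomp u i]
  exact flip_X _ _ _ _ (bit_lt_two u i) (Nat.mod_lt _ (Nat.two_pow_pos u))

lemma bit_flip_self (u i : ℕ) : flipN u i / 2^u % 2 = 1 - i / 2^u % 2 := by
  rw [flip_eq_X]
  exact bit_X_self _ _ _ _ (by have := bit_lt_two u i; omega) (Nat.mod_lt _ (Nat.two_pow_pos u))

lemma bit_flip_ne (u i α : ℕ) (hne : α ≠ u) : flipN u i / 2^α % 2 = i / 2^α % 2 := by
  rw [flip_eq_X]
  conv_rhs => rw [decomp u i]
  have hr : i % 2^u < 2^u := Nat.mod_lt _ (Nat.two_pow_pos u)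
  rw [bit_X_ne _ _ _ _ _ (by have := bit_lt_two u i; omega) hr hne,
    bit_X_ne _ _ _ _ _ (bit_lt_two u i) hr hne]

lemma flip_flip (u i : ℕ) : flipN u (flipN u i) = i := by
  rw [flip_eq_X u i]
  have hb := bit_lt_two u i
  have hr : i % 2^u < 2^u := Nat.mod_lt _ (Nat.two_pow_pos u)
  rw [flip_X _ _ _ _ (by omega) hr]
  have : 1 - (1 - i / 2^u % 2) = i / 2^u % 2 := by omega
  rw [this]
  exact (decomp u i).symm

lemma flip_lt (u i m : ℕ) (hu : u < m) (hi : i < 2^m) : flipN u i < 2^m := by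
  rw [flip_eq_X]
  have hb := bit_lt_two u i
  have hr : i % 2^u < 2^u := Nat.mod_lt _ (Nat.two_pow_pos u)
  rcases Nat.eq_zero_or_pos (i / 2^u % 2) with h | h
  · have hd := decomp u i
    rw [h] at hd
    have h1 : (1 : ℕ) - i / 2^u % 2 = 1 := by omega
    rw [h1]
    refine X_lt _ _ _ _ hr hu ?_
    rw [← hd]; exact hi
  · have hb1 : i / 2^u % 2 = 1 := by omega
    have h1 : (1:ℕ) - i / 2^u % 2 = 0 := by omega
    rw [h1]
    have hd := decomp u i
    rw [hb1] at hd
    have he : X u (i / 2^(u+1)) 1 (i % 2^u) = X u (i / 2^(u+1)) 0 (i % 2^u) + 2^u := by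
      unfold X; ring
    omega

lemma flip_ne (u i : ℕ) : flipN u i ≠ i := by
  intro h
  have := bit_flip_self u i
  rw [h] at this
  have := bit_lt_two u i
  omega

lemma pow_le_of_bit_one (u i : ℕ) (h : i / 2^u % 2 = 1) : 2^u ≤ i := by
  have hd := decomp u i
  rw [h] at hd
  unfold X at hd
  omega

lemma flip_add (u i t : ℕ) (h : i / 2^u % 2 = (i + t) / 2^u % 2) :
    flipN u i + t = flipN u (i + t) := by
  unfold flipN
  rcases Nat.eq_zero_or_pos (i / 2^u % 2) with h0 | h0
  · rw [if_pos h0, if_pos (by omega)]; ring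
  · have h1 : i / 2^u % 2 = 1 := by have := bit_lt_two u i; omega
    rw [if_neg (by omega), if_neg (by omega)]
    have := pow_le_of_bit_one u i h1
    omega

/-- injectivity of bits below `m` for numbers below `2^m` -/
lemma bits_inj : ∀ m i j, i < 2^m → j < 2^m → (∀ α, α < m → i / 2^α % 2 = j / 2^α % 2) → i = j := by
  intro m
  induction m with
  | zero => intro i j hi hj _; simp at hi hj; omega
  | succ m ih =>
    intro i j hi hj h
    have h0 : i % 2 = j % 2 := by have := h 0 (by omega); simpa using this
    have hd : i / 2 = j / 2 := by
      apply ih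
      · omega
      · omega
      · intro α hα
        have := h (α + 1) (by omega)
        rwa [pow_succ, Nat.mul_comm, ← Nat.div_div_eq_div_mul, ← Nat.div_div_eq_div_mul] at this
    omega


/-- the character `z ↦ ω^z.val` -/
noncomputable def chi (q : ℕ) (z : ZMod q) : ℂ := wq q ^ z.val

lemma wq_pow_q (hq0 : 0 < q) : wq q ^ q = 1 := by
  unfold wq
  rw [← Complex.exp_nat_mul]
  have hq : (q : ℂ) ≠ 0 := Nat.cast_ne_zero.mpr hq0.ne'
  have : (q : ℂ) * (2 * Real.pi * Complex.I / q) = 2 * Real.pi * Complex.I := by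
    field_simp
  rw [this, Complex.exp_two_pi_mul_I]

lemma wq_pow_mod (hq0 : 0 < q) (n : ℕ) : wq q ^ n = wq q ^ (n % q) := by
  conv_lhs => rw [← Nat.div_add_mod n q]
  rw [pow_add, pow_mul, wq_pow_q hq0, one_pow, one_mul]

lemma chi_natCast (hq0 : 0 < q) (n : ℕ) : chi q ((n : ℕ) : ZMod q) = wq q ^ n := by
  haveI : NeZero q := ⟨hq0.ne'⟩
  unfold chi
  rw [ZMod.val_natCast, ← wq_pow_mod hq0]

lemma chi_add (hq0 : 0 < q) (x y : ZMod q) : chi q (x + y) = chi q x * chi q y := by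
  haveI : NeZero q := ⟨hq0.ne'⟩
  unfold chi
  rw [← pow_add, wq_pow_mod hq0 (x.val + y.val), ← ZMod.val_add]

lemma abs_wq (hq0 : 0 < q) : ‖wq q‖ = 1 := by
  unfold wq
  have : 2 * (Real.pi : ℂ) * Complex.I / q = ((2 * Real.pi / q : ℝ) : ℂ) * Complex.I := by
    push_cast; ring
  rw [this, Complex.norm_exp_ofReal_mul_I]

lemma chi_zero (hq0 : 0 < q) : chi q (0 : ZMod q) = 1 := by
  haveI : NeZero q := ⟨hq0.ne'⟩
  unfold chi
  rw [ZMod.val_zero, pow_zero]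

lemma conj_chi (hq0 : 0 < q) (z : ZMod q) :
    (starRingEnd ℂ) (chi q z) = chi q (-z) := by
  have habs : ‖chi q z‖ = 1 := by
    unfold chi
    rw [norm_pow, abs_wq hq0, one_pow]
  have hmul : chi q z * chi q (-z) = 1 := by
    rw [← chi_add hq0, add_neg_cancel, chi_zero hq0]
  have h2 : (starRingEnd ℂ) (chi q z) * chi q z = 1 := by
    rw [mul_comm, Complex.mul_conj, Complex.normSq_eq_norm_sq, habs]
    norm_num
  have hne : chi q z ≠ 0 := by
    intro h; rw [h] at habs; simp at habs
  have h3 : chi q (-z) * chi q z = 1 := by rw [mul_comm]; exact hmul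
  exact mul_right_cancel₀ hne (h2.trans h3.symm)

lemma chi_q2 (hq : 2 ∣ q) (hq0 : 0 < q) : chi q ((q / 2 : ℕ) : ZMod q) = -1 := by
  rw [chi_natCast hq0]
  unfold wq
  rw [← Complex.exp_nat_mul]
  have hq2 : 2 * (q / 2) = q := Nat.two_mul_div_two_of_even (even_iff_two_dvd.mpr hq)
  have hqc : (q : ℂ) ≠ 0 := Nat.cast_ne_zero.mpr hq0.ne'
  have : ((q / 2 : ℕ) : ℂ) * (2 * Real.pi * Complex.I / q) = Real.pi * Complex.I := by
    have hcast : ((q / 2 : ℕ) : ℂ) * 2 = (q : ℂ) := by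
      norm_cast
      omega
    calc ((q / 2 : ℕ) : ℂ) * (2 * Real.pi * Complex.I / q)
        = (q : ℂ) * (Real.pi * Complex.I) / q := by rw [← hcast]; ring
      _ = Real.pi * Complex.I := mul_div_cancel_left₀ _ hqc
  rw [this, Complex.exp_pi_mul_I]

lemma chi_q2_mul (hq : 2 ∣ q) (hq0 : 0 < q) (n : ℕ) :
    chi q (((q / 2 : ℕ) : ZMod q) * ((n : ℕ) : ZMod q)) = (-1 : ℂ) ^ n := by
  have : ((q / 2 : ℕ) : ZMod q) * ((n : ℕ) : ZMod q) = ((q / 2 * n : ℕ) : ZMod q) := by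
    push_cast; ring
  rw [this, chi_natCast hq0, pow_mul, ← chi_natCast hq0 (q/2), chi_q2 hq hq0]

lemma neg_q2 (hq : 2 ∣ q) : -(((q / 2 : ℕ) : ZMod q)) = ((q / 2 : ℕ) : ZMod q) := by
  have h : ((q / 2 : ℕ) : ZMod q) + ((q / 2 : ℕ) : ZMod q) = 0 := by
    have : (q / 2 : ℕ) + (q / 2 : ℕ) = q := by omega
    rw [← Nat.cast_add, this, ZMod.natCast_self]
  linear_combination -h


lemma f_update (q m : ℕ) (Q : Fin m → Fin m → ZMod q) (g : Fin m → ZMod q) (g' : ZMod q)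
    (f : (Fin m → ℕ) → ZMod q)
    (hf : ∀ x : Fin m → ℕ, (∀ i, x i ≤ 1) →
      f x = (∑ α : Fin m, ∑ β : Fin m,
          if α < β then Q α β * (x α : ZMod q) * (x β : ZMod q) else 0)
        + ∑ i : Fin m, g i * (x i : ZMod q) + g')
    (x : Fin m → ℕ) (hx : ∀ i, x i ≤ 1) (u : Fin m) (b : ℕ) (hb : b ≤ 1) :
    f (Function.update x u b) = f x + ((b : ZMod q) - (x u : ZMod q)) *
      ((∑ β : Fin m, if u < β then Q u β * (x β : ZMod q) else 0)
        + (∑ α : Fin m, if α < u then Q α u * (x α : ZMod q) else 0) + g u) := by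
  set x' := Function.update x u b with hx'def
  have hx'le : ∀ i, x' i ≤ 1 := by
    intro i
    by_cases h : i = u
    · subst h; rw [hx'def, Function.update_self]; exact hb
    · rw [hx'def, Function.update_of_ne h]; exact hx i
  set e : ZMod q := (b : ZMod q) - (x u : ZMod q) with he
  have hxu' : (x' u : ZMod q) = (x u : ZMod q) + e := by
    rw [hx'def, Function.update_self, he]; ring
  have hxne : ∀ i, i ≠ u → (x' i : ZMod q) = (x i : ZMod q) := by
    intro i h; rw [hx'def, Function.update_of_ne h]
  rw [hf x' hx'le, hf x hx]
  have hpt : ∀ α β : Fin m,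
      (if α < β then Q α β * (x' α : ZMod q) * (x' β : ZMod q) else 0)
      = (if α < β then Q α β * (x α : ZMod q) * (x β : ZMod q) else 0)
        + (if α = u then (if α < β then Q α β * (x β : ZMod q) else 0) * e else 0)
        + (if β = u then (if α < β then Q α β * (x α : ZMod q) else 0) * e else 0) := by
    intro α β
    by_cases hau : α = u <;> by_cases hbu : β = u
    · rw [hau, hbu]; simp [lt_irrefl]
    · rw [if_pos hau, if_neg hbu, hxne β hbu, hau]
      by_cases hlt : u < β
      · rw [if_pos hlt, if_pos hlt, if_pos hlt, hxu']; ring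
      · rw [if_neg hlt, if_neg hlt, if_neg hlt]; ring
    · rw [if_neg hau, if_pos hbu, hxne α hau, hbu]
      by_cases hlt : α < u
      · rw [if_pos hlt, if_pos hlt, if_pos hlt, hxu']; ring
      · rw [if_neg hlt, if_neg hlt, if_neg hlt]; ring
    · rw [if_neg hau, if_neg hbu, hxne α hau, hxne β hbu]; ring
  have hquad : (∑ α : Fin m, ∑ β : Fin m,
      if α < β then Q α β * (x' α : ZMod q) * (x' β : ZMod q) else 0)
      = (∑ α : Fin m, ∑ β : Fin m,
          if α < β then Q α β * (x α : ZMod q) * (x β : ZMod q) else 0)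
        + (∑ β : Fin m, if u < β then Q u β * (x β : ZMod q) else 0) * e
        + (∑ α : Fin m, if α < u then Q α u * (x α : ZMod q) else 0) * e := by
    calc (∑ α : Fin m, ∑ β : Fin m,
        if α < β then Q α β * (x' α : ZMod q) * (x' β : ZMod q) else 0)
        = ∑ α : Fin m, ∑ β : Fin m,
            ((if α < β then Q α β * (x α : ZMod q) * (x β : ZMod q) else 0)
            + (if α = u then (if α < β then Q α β * (x β : ZMod q) else 0) * e else 0)
            + (if β = u then (if α < β then Q α β * (x α : ZMod q) else 0) * e else 0)) := by
          exact Finset.sum_congr rfl fun α _ => Finset.sum_congr rfl fun β _ => hpt α β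
      _ = (∑ α : Fin m, ∑ β : Fin m,
            if α < β then Q α β * (x α : ZMod q) * (x β : ZMod q) else 0)
          + (∑ α : Fin m, ∑ β : Fin m,
            if α = u then (if α < β then Q α β * (x β : ZMod q) else 0) * e else 0)
          + (∑ α : Fin m, ∑ β : Fin m,
            if β = u then (if α < β then Q α β * (x α : ZMod q) else 0) * e else 0) := by
          rw [← Finset.sum_add_distrib, ← Finset.sum_add_distrib]
          exact Finset.sum_congr rfl fun α _ => by
            rw [← Finset.sum_add_distrib, ← Finset.sum_add_distrib]
      _ = _ := by
          have h2 : (∑ α : Fin m, ∑ β : Fin m,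
              if α = u then (if α < β then Q α β * (x β : ZMod q) else 0) * e else 0)
              = (∑ β : Fin m, if u < β then Q u β * (x β : ZMod q) else 0) * e := by
            have hin : ∀ α : Fin m, (∑ β : Fin m,
                if α = u then (if α < β then Q α β * (x β : ZMod q) else 0) * e else 0)
                = if α = u then (∑ β : Fin m, if α < β then Q α β * (x β : ZMod q) else 0) * e else 0 := by
              intro α
              by_cases h : α = u
              · simp only [if_pos h, Finset.sum_mul]
              · simp only [if_neg h, Finset.sum_const_zero]
            rw [Finset.sum_congr rfl fun α _ => hin α, Finset.sum_ite_eq' Finset.univ u, if_pos (Finset.mem_univ u)]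
          have h3 : (∑ α : Fin m, ∑ β : Fin m,
              if β = u then (if α < β then Q α β * (x α : ZMod q) else 0) * e else 0)
              = (∑ α : Fin m, if α < u then Q α u * (x α : ZMod q) else 0) * e := by
            have hin : ∀ α : Fin m, (∑ β : Fin m,
                if β = u then (if α < β then Q α β * (x α : ZMod q) else 0) * e else 0)
                = (if α < u then Q α u * (x α : ZMod q) else 0) * e := by
              intro α
              rw [Finset.sum_ite_eq' Finset.univ u, if_pos (Finset.mem_univ u)]
            rw [Finset.sum_congr rfl fun α _ => hin α, Finset.sum_mul]
          rw [h2, h3]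
  have hlin : (∑ i : Fin m, g i * (x' i : ZMod q))
      = (∑ i : Fin m, g i * (x i : ZMod q)) + g u * e := by
    have hin : ∀ i : Fin m, g i * (x' i : ZMod q)
        = g i * (x i : ZMod q) + (if i = u then g i * e else 0) := by
      intro i
      by_cases h : i = u
      · rw [if_pos h, h, hxu']; ring
      · rw [if_neg h, hxne i h]; ring
    rw [Finset.sum_congr rfl fun i _ => hin i, Finset.sum_add_distrib,
      Finset.sum_ite_eq' Finset.univ u, if_pos (Finset.mem_univ u)]
  rw [hquad, hlin]
  ring


def Qs {q m : ℕ} (Q : Fin m → Fin m → ZMod q) (α β : Fin m) : ZMod q :=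
  if α < β then Q α β else Q β α

def Dset (m t n : ℕ) (σ : Fin n → Fin m) (i : ℕ) : Finset (Fin n) :=
  Finset.univ.filter (fun p => bitv m (i+t) (σ p) ≠ bitv m i (σ p))

def pstar (m t n : ℕ) (hn : 0 < n) (σ : Fin n → Fin m) (i : ℕ) : Fin n :=
  if h : (Dset m t n σ i).Nonempty then (Dset m t n σ i).min' h else ⟨0, hn⟩

def gfun (m t n : ℕ) (hn : 0 < n) (σ : Fin n → Fin m) (i : ℕ) : ℕ :=
  flipN (σ ⟨(pstar m t n hn σ i : ℕ) - 1,
    Nat.lt_of_le_of_lt (Nat.sub_le _ _) (Fin.is_lt _)⟩ : Fin m).val i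

lemma gfun_eq (m t n : ℕ) (hn : 0 < n) (σ : Fin n → Fin m) (i : ℕ) (r : Fin n)
    (h : pstar m t n hn σ i = r) :
    gfun m t n hn σ i = flipN (σ ⟨(r : ℕ) - 1,
      Nat.lt_of_le_of_lt (Nat.sub_le _ _) (Fin.is_lt _)⟩ : Fin m).val i := by
  subst h; rfl

lemma bitv_le_one (m i : ℕ) (α : Fin m) : bitv m i α ≤ 1 := by
  have : i / 2 ^ (α : ℕ) % 2 < 2 := Nat.mod_lt _ (by norm_num)
  unfold bitv
  omega

lemma bitv_flip (m : ℕ) (u : Fin m) (i : ℕ) :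
    bitv m (flipN (u : ℕ) i) = Function.update (bitv m i) u (1 - bitv m i u) := by
  funext α
  by_cases h : α = u
  · rw [h, Function.update_self]; exact bit_flip_self _ _
  · rw [Function.update_of_ne h]
    exact bit_flip_ne _ _ _ (fun hc => h (Fin.ext hc))

lemma bitv_inj (m i j : ℕ) (hi : i < 2^m) (hj : j < 2^m)
    (h : ∀ α : Fin m, bitv m i α = bitv m j α) : i = j := by
  apply bits_inj m i j hi hj
  intro α hα
  exact h ⟨α, hα⟩

lemma crux (q m k t n : ℕ) (hq : 2 ∣ q) (hq0 : 0 < q) (ht : 0 < t)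
    (Q : Fin m → Fin m → ZMod q) (g : Fin m → ZMod q) (g' : ZMod q)
    (f : (Fin m → ℕ) → ZMod q)
    (hf : ∀ x : Fin m → ℕ, (∀ i, x i ≤ 1) →
      f x = (∑ α : Fin m, ∑ β : Fin m,
          if α < β then Q α β * (x α : ZMod q) * (x β : ZMod q) else 0)
        + ∑ i : Fin m, g i * (x i : ZMod q) + g')
    (J : Fin k → Fin m)
    (σ : Fin n → Fin m) (hσ : Function.Injective σ)
    (hσJ : ∀ i α, σ i ≠ J α)
    (hσcover : ∀ v : Fin m, (∀ α, v ≠ J α) → ∃ i, σ i = v)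
    (hQpath : ∀ p : Fin n, ∀ hp : (p:ℕ)+1 < n,
      Qs Q (σ p) (σ ⟨(p:ℕ)+1, hp⟩) = ((q/2 : ℕ) : ZMod q))
    (hQnon : ∀ p p' : Fin n, p ≠ p' → ((p':ℕ) ≠ (p:ℕ)+1) → ((p:ℕ) ≠ (p':ℕ)+1) →
      Qs Q (σ p) (σ p') = 0)
    (a : Fin m) (hn : 0 < n) (ha : a = σ ⟨0, hn⟩)
    (i : ℕ) (hilt : i < 2^m - t)
    (hagJ : ∀ γ : Fin k, bitv m (i+t) (J γ) = bitv m i (J γ))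
    (haga : bitv m (i+t) a = bitv m i a) :
    (gfun m t n hn σ i < 2^m - t
      ∧ (∀ γ : Fin k, bitv m (gfun m t n hn σ i + t) (J γ)
            = bitv m (gfun m t n hn σ i) (J γ))
      ∧ bitv m (gfun m t n hn σ i + t) a = bitv m (gfun m t n hn σ i) a)
    ∧ gfun m t n hn σ (gfun m t n hn σ i) = i
    ∧ chi q (f (bitv m (i+t))) * (starRingEnd ℂ) (chi q (f (bitv m i)))
        + chi q (f (bitv m (gfun m t n hn σ i + t)))
          * (starRingEnd ℂ) (chi q (f (bitv m (gfun m t n hn σ i)))) = 0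
    ∧ gfun m t n hn σ i ≠ i := by
  have hjlt : i + t < 2^m := by omega
  have hilt2 : i < 2^m := by omega
  -- the set of differing path positions is nonempty
  have hDne : (Dset m t n σ i).Nonempty := by
    have hne : i ≠ i + t := by omega
    have hv : ∃ α : Fin m, bitv m (i+t) α ≠ bitv m i α := by
      by_contra hc
      push_neg at hc
      exact hne (bitv_inj m i (i+t) hilt2 hjlt (fun α => (hc α).symm))
    obtain ⟨v, hv⟩ := hv
    have hvJ : ∀ γ, v ≠ J γ := by
      intro γ hc
      exact hv (by rw [hc]; exact hagJ γ)
    obtain ⟨p, hp⟩ := hσcover v hvJ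
    exact ⟨p, by rw [Dset, Finset.mem_filter]; exact ⟨Finset.mem_univ _, by rw [hp]; exact hv⟩⟩
  have hps : pstar m t n hn σ i = (Dset m t n σ i).min' hDne := dif_pos hDne
  obtain ⟨ps, hpsdef⟩ : ∃ ps : Fin n, pstar m t n hn σ i = ps := ⟨_, rfl⟩
  rw [hpsdef] at hps
  have hpsmem : ps ∈ Dset m t n σ i := by rw [hps]; exact Finset.min'_mem _ _
  have hpsD : bitv m (i+t) (σ ps) ≠ bitv m i (σ ps) := by
    have := hpsmem
    rw [Dset, Finset.mem_filter] at this
    exact this.2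
  have hmin : ∀ p : Fin n, (p : ℕ) < (ps : ℕ) → bitv m (i+t) (σ p) = bitv m i (σ p) := by
    intro p hp
    by_contra hc
    have hpD : p ∈ Dset m t n σ i := by
      rw [Dset, Finset.mem_filter]; exact ⟨Finset.mem_univ _, hc⟩
    have h1 : (Dset m t n σ i).min' hDne ≤ p := Finset.min'_le _ p hpD
    rw [← hps] at h1
    have h2 : (ps : ℕ) ≤ (p : ℕ) := h1
    omega
  have hps0 : (ps : ℕ) ≠ 0 := by
    intro hc
    have hc2 : ps = ⟨0, hn⟩ := Fin.ext hc
    rw [hc2, ← ha] at hpsD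
    exact hpsD haga
  -- the flip position
  obtain ⟨pu, hpudef⟩ : ∃ pu : Fin n, (⟨(ps : ℕ) - 1,
      Nat.lt_of_le_of_lt (Nat.sub_le _ _) (Fin.is_lt _)⟩ : Fin n) = pu := ⟨_, rfl⟩
  obtain ⟨u, hudef⟩ : ∃ u : Fin m, σ pu = u := ⟨_, rfl⟩
  have hpuval : (pu : ℕ) = (ps : ℕ) - 1 := by rw [← hpudef]
  have hgi : gfun m t n hn σ i = flipN (u : ℕ) i := by
    rw [gfun_eq m t n hn σ i ps hpsdef, hpudef, hudef]
  have hpu_lt : (pu : ℕ) < (ps : ℕ) := by omega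
  have hxyu : bitv m (i+t) u = bitv m i u := by
    rw [← hudef]; exact hmin pu hpu_lt
  have hbitu : i / 2^(u:ℕ) % 2 = (i + t) / 2^(u:ℕ) % 2 := hxyu.symm
  have hgadd : gfun m t n hn σ i + t = flipN (u : ℕ) (i + t) := by
    rw [hgi]; exact flip_add _ _ _ hbitu
  have hglt : gfun m t n hn σ i < 2^m - t := by
    have : flipN (u : ℕ) (i + t) < 2^m := flip_lt _ _ _ (Fin.is_lt u) hjlt
    omega
  have hx' : bitv m (gfun m t n hn σ i + t)
      = Function.update (bitv m (i+t)) u (1 - bitv m (i+t) u) := by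
    rw [hgadd]; exact bitv_flip m u (i+t)
  have hy' : bitv m (gfun m t n hn σ i)
      = Function.update (bitv m i) u (1 - bitv m i u) := by
    rw [hgi]; exact bitv_flip m u i
  have huJ : ∀ γ : Fin k, J γ ≠ u := by
    intro γ hc
    exact hσJ pu γ (by rw [hudef, hc])
  -- membership conditions
  have hagJ' : ∀ γ : Fin k, bitv m (gfun m t n hn σ i + t) (J γ)
      = bitv m (gfun m t n hn σ i) (J γ) := by
    intro γ
    rw [hx', hy', Function.update_of_ne (huJ γ), Function.update_of_ne (huJ γ)]
    exact hagJ γ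
  have haga' : bitv m (gfun m t n hn σ i + t) a = bitv m (gfun m t n hn σ i) a := by
    rw [hx', hy']
    by_cases hau : a = u
    · rw [hau, Function.update_self, Function.update_self, hxyu]
    · rw [Function.update_of_ne hau, Function.update_of_ne hau]
      exact haga
  -- involution
  have hD' : Dset m t n σ (gfun m t n hn σ i) = Dset m t n σ i := by
    ext p
    rw [Dset, Dset, Finset.mem_filter, Finset.mem_filter]
    rw [hx', hy']
    by_cases hpv : σ p = u
    · rw [hpv, Function.update_self, Function.update_self, hxyu]
      simp
    · rw [Function.update_of_ne hpv, Function.update_of_ne hpv]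
  have hinv : gfun m t n hn σ (gfun m t n hn σ i) = i := by
    have hps2 : pstar m t n hn σ (gfun m t n hn σ i) = ps := by
      rw [pstar, hD', dif_pos hDne, ← hps]
    rw [gfun_eq m t n hn σ _ ps hps2, hpudef, hudef, hgi, flip_flip]
  -- the sign flip
  have hsign : chi q (f (bitv m (i+t))) * (starRingEnd ℂ) (chi q (f (bitv m i)))
      + chi q (f (bitv m (gfun m t n hn σ i + t)))
        * (starRingEnd ℂ) (chi q (f (bitv m (gfun m t n hn σ i)))) = 0 := by
    obtain ⟨x, hxdef⟩ : ∃ x, bitv m (i+t) = x := ⟨_, rfl⟩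
    obtain ⟨y, hydef⟩ : ∃ y, bitv m i = y := ⟨_, rfl⟩
    rw [hxdef] at hx' hagJ haga hxyu hpsD hmin
    rw [hydef] at hy' hagJ haga hxyu hpsD hmin
    rw [hxdef, hydef]
    have hxle : ∀ α, x α ≤ 1 := by rw [← hxdef]; exact bitv_le_one _ _
    have hyle : ∀ α, y α ≤ 1 := by rw [← hydef]; exact bitv_le_one _ _
    obtain ⟨ex, hexdef⟩ : ∃ e : ZMod q,
      ((1 - x u : ℕ) : ZMod q) - ((x u : ℕ) : ZMod q) = e := ⟨_, rfl⟩
    obtain ⟨Tx, hTxdef⟩ : ∃ T : ZMod q,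
      (∑ β : Fin m, if u < β then Q u β * ((x β : ℕ) : ZMod q) else 0)
        + (∑ α : Fin m, if α < u then Q α u * ((x α : ℕ) : ZMod q) else 0) + g u = T := ⟨_, rfl⟩
    obtain ⟨Ty, hTydef⟩ : ∃ T : ZMod q,
      (∑ β : Fin m, if u < β then Q u β * ((y β : ℕ) : ZMod q) else 0)
        + (∑ α : Fin m, if α < u then Q α u * ((y α : ℕ) : ZMod q) else 0) + g u = T := ⟨_, rfl⟩
    have hFX : f (bitv m (gfun m t n hn σ i + t)) = f x + ex * Tx := by
      rw [hx', f_update q m Q g g' f hf x hxle u (1 - x u) (by omega), hexdef, hTxdef]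
    have hFY : f (bitv m (gfun m t n hn σ i)) = f y + ex * Ty := by
      rw [hy', f_update q m Q g g' f hf y hyle u (1 - y u) (by omega), hTydef]
      rw [← hxyu, hexdef]
    -- difference of the linear forms
    have hTT : Tx - Ty = ∑ β : Fin m,
        ((if u < β then Q u β * (((x β : ℕ) : ZMod q) - ((y β : ℕ) : ZMod q)) else 0)
          + (if β < u then Q β u * (((x β : ℕ) : ZMod q) - ((y β : ℕ) : ZMod q)) else 0)) := by
      have e1 : (∑ β : Fin m, if u < β then Q u β * (((x β : ℕ) : ZMod q) - ((y β : ℕ) : ZMod q)) else 0)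
          = (∑ β : Fin m, if u < β then Q u β * ((x β : ℕ) : ZMod q) else 0)
            - (∑ β : Fin m, if u < β then Q u β * ((y β : ℕ) : ZMod q) else 0) := by
        rw [← Finset.sum_sub_distrib]
        refine Finset.sum_congr rfl fun β _ => ?_
        split_ifs with h
        · ring
        · ring
      have e2 : (∑ β : Fin m, if β < u then Q β u * (((x β : ℕ) : ZMod q) - ((y β : ℕ) : ZMod q)) else 0)
          = (∑ β : Fin m, if β < u then Q β u * ((x β : ℕ) : ZMod q) else 0)
            - (∑ β : Fin m, if β < u then Q β u * ((y β : ℕ) : ZMod q) else 0) := by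
        rw [← Finset.sum_sub_distrib]
        refine Finset.sum_congr rfl fun β _ => ?_
        split_ifs with h
        · ring
        · ring
      rw [Finset.sum_add_distrib, e1, e2, ← hTxdef, ← hTydef]
      ring
    -- identify the unique surviving term
    have huv : u ≠ σ ps := by
      intro hc
      rw [← hudef] at hc
      have := hσ hc
      rw [this] at hpu_lt
      exact lt_irrefl _ hpu_lt
    have hW : ∀ β : Fin m,
        ((if u < β then Q u β * (((x β : ℕ) : ZMod q) - ((y β : ℕ) : ZMod q)) else 0)
          + (if β < u then Q β u * (((x β : ℕ) : ZMod q) - ((y β : ℕ) : ZMod q)) else 0))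
        = if β = σ ps then Qs Q u (σ ps) * (((x (σ ps) : ℕ) : ZMod q) - ((y (σ ps) : ℕ) : ZMod q)) else 0 := by
      intro β
      by_cases hbv : β = σ ps
      · rw [if_pos hbv, hbv]
        rcases lt_or_gt_of_ne huv with h | h
        · rw [if_pos h, if_neg (asymm h), Qs, if_pos h]
          ring
        · rw [if_neg (asymm h), if_pos h, Qs, if_neg (not_lt_of_gt h)]
          ring
      · rw [if_neg hbv]
        by_cases hcz : ((x β : ℕ) : ZMod q) - ((y β : ℕ) : ZMod q) = 0
        · split_ifs <;> simp [hcz]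
        · have hnat : x β ≠ y β := by
            intro h
            exact hcz (by rw [h]; ring)
          have hbu : β ≠ u := by
            intro hc
            rw [hc] at hnat
            exact hnat hxyu
          have hbJ : ∀ γ, β ≠ J γ := by
            intro γ hc
            exact hnat (by rw [hc]; exact hagJ γ)
          obtain ⟨p, hp⟩ := hσcover β hbJ
          have hpD : p ∈ Dset m t n σ i := by
            rw [Dset, Finset.mem_filter]
            refine ⟨Finset.mem_univ _, ?_⟩
            rw [hp, hxdef, hydef]
            exact hnat
          have hle : (ps : ℕ) ≤ (p : ℕ) := by
            have h1 : (Dset m t n σ i).min' hDne ≤ p := Finset.min'_le _ p hpD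
            rw [← hps] at h1
            exact h1
          have hpne : p ≠ ps := by
            intro hc
            exact hbv (by rw [← hp, hc])
          have hgt : (ps : ℕ) < (p : ℕ) := lt_of_le_of_ne hle
            (fun hc => hpne (Fin.ext hc.symm))
          have hQ0 : Qs Q u β = 0 := by
            rw [← hudef, ← hp]
            refine hQnon pu p ?_ ?_ ?_
            · intro hc; rw [hc] at hpu_lt; omega
            · omega
            · omega
          rcases lt_trichotomy u β with h | h | h
          · rw [if_pos h, if_neg (asymm h)]
            rw [Qs, if_pos h] at hQ0
            rw [hQ0]; ring
          · exact absurd h.symm hbu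
          · rw [if_neg (asymm h), if_pos h]
            rw [Qs, if_neg (not_lt_of_gt h)] at hQ0
            rw [hQ0]; ring
    have hsum : Tx - Ty = Qs Q u (σ ps)
        * (((x (σ ps) : ℕ) : ZMod q) - ((y (σ ps) : ℕ) : ZMod q)) := by
      rw [hTT, Finset.sum_congr rfl fun β _ => hW β, Finset.sum_ite_eq' Finset.univ (σ ps),
        if_pos (Finset.mem_univ _)]
    -- evaluate the surviving term
    have hQval : Qs Q u (σ ps) = ((q/2 : ℕ) : ZMod q) := by
      have hplt : (pu : ℕ) + 1 < n := by
        have := ps.is_lt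
        omega
      have hfin : (⟨(pu : ℕ) + 1, hplt⟩ : Fin n) = ps :=
        Fin.ext (by simp only [Fin.val_mk]; omega)
      rw [← hudef, ← hfin]
      exact hQpath pu hplt
    have hdd : ex * Tx - ex * Ty = ((q/2 : ℕ) : ZMod q) := by
      rw [← mul_sub, hsum, hQval]
      have hx1 : x u ≤ 1 := hxle u
      have hy1 : x (σ ps) ≤ 1 := hxle _
      have hy2 : y (σ ps) ≤ 1 := hyle _
      have hxyv : x (σ ps) ≠ y (σ ps) := hpsD
      rw [← hexdef]
      have h1 : x u = 0 ∨ x u = 1 := by omega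
      have h2 : x (σ ps) = 0 ∨ x (σ ps) = 1 := by omega
      have h3 : y (σ ps) = 0 ∨ y (σ ps) = 1 := by omega
      rcases h1 with h1 | h1 <;> rcases h2 with h2 | h2 <;> rcases h3 with h3 | h3 <;>
          simp only [h1, h2, h3, Nat.sub_zero, Nat.sub_self, Nat.cast_zero, Nat.cast_one]
      · exact absurd (h2.trans h3.symm) hxyv
      · linear_combination neg_q2 hq
      · ring
      · exact absurd (h2.trans h3.symm) hxyv
      · exact absurd (h2.trans h3.symm) hxyv
      · ring
      · linear_combination neg_q2 hq
      · exact absurd (h2.trans h3.symm) hxyv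
    have harg : f x + ex * Tx + -(f y + ex * Ty) = (f x + - f y) + ((q/2 : ℕ) : ZMod q) := by
      linear_combination hdd
    rw [hFX, hFY, conj_chi hq0, conj_chi hq0, ← chi_add hq0, ← chi_add hq0, harg,
      chi_add hq0 (f x + - f y) (((q/2 : ℕ) : ZMod q)), chi_q2 hq hq0]
    ring
  exact ⟨⟨hglt, hagJ', haga'⟩, hinv, hsign, by rw [hgi]; exact flip_ne _ _⟩


lemma neg_pow_odd_pair (ca A B : ℕ) (h : Odd ca) :
    (-1:ℂ)^((1*ca + A) + B) + (-1:ℂ)^((0*ca + A) + B) = 0 := by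
  simp only [one_mul, zero_mul, Nat.zero_add]
  rw [pow_add, pow_add, pow_add, h.neg_one_pow]
  ring

lemma neg_pow_odd_pair' (ca A B : ℕ) (h : Odd ca) :
    (-1:ℂ)^((0*ca + A) + B) + (-1:ℂ)^((1*ca + A) + B) = 0 := by
  rw [add_comm]
  exact neg_pow_odd_pair ca A B h

lemma dsum (k : ℕ) (c : Fin k → ℕ) (c0 : ℕ) :
    (∑ d : Fin k → Bool, ∑ dd : Bool,
      (-1 : ℂ) ^ ((∑ α : Fin k, (d α).toNat * c α) + dd.toNat * c0))
    = if (∀ α, Even (c α)) ∧ Even c0 then ((2:ℂ)^(k+1)) else 0 := by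
  split_ifs with hcond
  · obtain ⟨hc, hc0⟩ := hcond
    have hone : ∀ (d : Fin k → Bool) (dd : Bool),
        (-1 : ℂ) ^ ((∑ α : Fin k, (d α).toNat * c α) + dd.toNat * c0) = 1 := by
      intro d dd
      apply Even.neg_one_pow
      rw [even_iff_two_dvd]
      exact dvd_add (Finset.dvd_sum fun α _ => ((hc α).two_dvd).mul_left _)
        ((hc0.two_dvd).mul_left _)
    calc (∑ d : Fin k → Bool, ∑ dd : Bool,
        (-1 : ℂ) ^ ((∑ α : Fin k, (d α).toNat * c α) + dd.toNat * c0))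
        = ∑ d : Fin k → Bool, ∑ dd : Bool, (1:ℂ) := by
          exact Finset.sum_congr rfl fun d _ => Finset.sum_congr rfl fun dd _ => hone d dd
      _ = (2:ℂ)^(k+1) := by
          simp only [Finset.sum_const, Finset.card_univ, Fintype.card_bool, nsmul_eq_mul,
            Nat.cast_ofNat, mul_one, Fintype.card_fun, Fintype.card_fin]
          rw [pow_succ]
          push_cast
          ring
  · rw [not_and_or] at hcond
    push_neg at hcond
    have hsplit : ∀ (d : Fin k → Bool) (dd : Bool),
        (-1 : ℂ) ^ ((∑ α : Fin k, (d α).toNat * c α) + dd.toNat * c0)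
        = (-1 : ℂ) ^ (∑ α : Fin k, (d α).toNat * c α) * (-1 : ℂ) ^ (dd.toNat * c0) :=
      fun d dd => pow_add _ _ _
    rcases hcond with hodd | hc0
    · -- some c α0 is odd : involution on d
      obtain ⟨α0, hα0⟩ := hodd
      rw [Nat.not_even_iff_odd] at hα0
      have hzero : ∀ dd : Bool, (∑ d : Fin k → Bool,
          (-1 : ℂ) ^ ((∑ α : Fin k, (d α).toNat * c α) + dd.toNat * c0)) = 0 := by
        intro dd
        refine Finset.sum_involution
          (fun d _ => Function.update d α0 (!d α0)) ?_ ?_ ?_ ?_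
        · intro d _
          have hsum1 : (∑ α : Fin k, ((Function.update d α0 (!d α0)) α).toNat * c α)
              = (!d α0).toNat * c α0
                + ∑ α ∈ Finset.univ \ {α0}, (d α).toNat * c α := by
            rw [Finset.sum_eq_add_sum_sdiff_singleton_of_mem (Finset.mem_univ α0)]
            congr 1
            · rw [Function.update_self]
            · refine Finset.sum_congr rfl fun β hβ => ?_
              rw [Finset.mem_sdiff, Finset.mem_singleton] at hβ
              rw [Function.update_of_ne hβ.2]
          have hsum2 : (∑ α : Fin k, (d α).toNat * c α)
              = (d α0).toNat * c α0
                + ∑ α ∈ Finset.univ \ {α0}, (d α).toNat * c α := by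
            rw [Finset.sum_eq_add_sum_sdiff_singleton_of_mem (Finset.mem_univ α0)]
          rw [hsum1, hsum2]
          cases hd : d α0
          · simp only [hd, Bool.not_false, Bool.toNat_true, Bool.toNat_false]
            exact neg_pow_odd_pair' _ _ _ hα0
          · simp only [hd, Bool.not_true, Bool.toNat_true, Bool.toNat_false]
            exact neg_pow_odd_pair _ _ _ hα0
        · intro d _ _
          intro hcon
          have := congrFun hcon α0
          simp at this
        · intro d _
          exact Finset.mem_univ _
        · intro d _
          funext β
          rcases eq_or_ne β α0 with rfl | hb
          · simp
          · simp [Function.update_of_ne hb]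
      rw [Finset.sum_comm]
      rw [Finset.sum_congr rfl fun dd _ => hzero dd]
      simp
    · -- c0 odd : inner sum over dd is zero
      rw [Nat.not_even_iff_odd] at hc0
      have hzero : ∀ d : Fin k → Bool, (∑ dd : Bool,
          (-1 : ℂ) ^ ((∑ α : Fin k, (d α).toNat * c α) + dd.toNat * c0)) = 0 := by
        intro d
        rw [Fintype.sum_bool]
        simp only [Bool.toNat_true, Bool.toNat_false, one_mul, zero_mul, Nat.add_zero]
        rw [pow_add, hc0.neg_one_pow]
        ring
      rw [Finset.sum_congr rfl fun d _ => hzero d]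
      simp


lemma key_cancel (q m k t n : ℕ) (hq : 2 ∣ q) (hq0 : 0 < q) (ht : 0 < t)
    (Q : Fin m → Fin m → ZMod q) (g : Fin m → ZMod q) (g' : ZMod q)
    (f : (Fin m → ℕ) → ZMod q)
    (hf : ∀ x : Fin m → ℕ, (∀ i, x i ≤ 1) →
      f x = (∑ α : Fin m, ∑ β : Fin m,
          if α < β then Q α β * (x α : ZMod q) * (x β : ZMod q) else 0)
        + ∑ i : Fin m, g i * (x i : ZMod q) + g')
    (J : Fin k → Fin m)
    (σ : Fin n → Fin m) (hσ : Function.Injective σ)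
    (hσJ : ∀ i α, σ i ≠ J α)
    (hσcover : ∀ v : Fin m, (∀ α, v ≠ J α) → ∃ i, σ i = v)
    (hQpath : ∀ p : Fin n, ∀ hp : (p:ℕ)+1 < n,
      Qs Q (σ p) (σ ⟨(p:ℕ)+1, hp⟩) = ((q/2 : ℕ) : ZMod q))
    (hQnon : ∀ p p' : Fin n, p ≠ p' → ((p':ℕ) ≠ (p:ℕ)+1) → ((p:ℕ) ≠ (p':ℕ)+1) →
      Qs Q (σ p) (σ p') = 0)
    (a : Fin m) (hn : 0 < n) (ha : a = σ ⟨0, hn⟩) :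
    ∑ i ∈ (Finset.range (2^m - t)).filter (fun i =>
        (∀ γ : Fin k, bitv m (i+t) (J γ) = bitv m i (J γ)) ∧ bitv m (i+t) a = bitv m i a),
      chi q (f (bitv m (i+t))) * (starRingEnd ℂ) (chi q (f (bitv m i))) = 0 := by
  classical
  have hcx := fun (i : ℕ) (h1 : i < 2^m - t)
      (h2 : ∀ γ : Fin k, bitv m (i+t) (J γ) = bitv m i (J γ))
      (h3 : bitv m (i+t) a = bitv m i a) =>
    crux q m k t n hq hq0 ht Q g g' f hf J σ hσ hσJ hσcover hQpath hQnon a hn ha i h1 h2 h3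
  refine Finset.sum_involution (fun i _ => gfun m t n hn σ i) ?_ ?_ ?_ ?_
  · intro i hi
    rw [Finset.mem_filter, Finset.mem_range] at hi
    exact (hcx i hi.1 hi.2.1 hi.2.2).2.2.1
  · intro i hi _
    rw [Finset.mem_filter, Finset.mem_range] at hi
    exact (hcx i hi.1 hi.2.1 hi.2.2).2.2.2
  · intro i hi
    rw [Finset.mem_filter, Finset.mem_range] at hi
    rw [Finset.mem_filter, Finset.mem_range]
    obtain ⟨ha1, ha2, ha3⟩ := (hcx i hi.1 hi.2.1 hi.2.2).1
    exact ⟨ha1, ha2, ha3⟩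
  · intro i hi
    rw [Finset.mem_filter, Finset.mem_range] at hi
    exact (hcx i hi.1 hi.2.1 hi.2.2).2.1

lemma even_bits (p r : ℕ) (hp : p ≤ 1) (hr : r ≤ 1) : (Even (p + r)) ↔ p = r := by
  interval_cases p <;> interval_cases r <;> decide

lemma aC_neg (L : ℕ) (aa : ℕ → ℂ) (τ : ℤ) (h : τ < 0) :
    aC L aa τ = (starRingEnd ℂ) (aC L aa (-τ)) := by
  unfold aC cC
  have h1 : ¬(0 ≤ τ ∧ τ < (L:ℤ)) := by omega
  rw [if_neg h1]
  by_cases hb : -(L:ℤ) < τ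
  · have h2 : 0 ≤ -τ ∧ -τ < (L:ℤ) := by omega
    rw [if_pos ⟨hb, h⟩, if_pos h2, map_sum]
    have hnn : (- -τ) = τ := by ring
    refine Finset.sum_congr rfl fun i _ => ?_
    rw [map_mul, Complex.conj_conj]
    ring
  · have h3 : ¬(-(L:ℤ) < τ ∧ τ < 0) := by omega
    have h4 : ¬(0 ≤ -τ ∧ -τ < (L:ℤ)) := by omega
    have h5 : ¬(-(L:ℤ) < -τ ∧ -τ < 0) := by omega
    rw [if_neg h3, if_neg h4, if_neg h5, map_zero]


lemma Qs_symm {q m : ℕ} (Q : Fin m → Fin m → ZMod q) (α β : Fin m) (h : α ≠ β) :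
    Qs Q α β = Qs Q β α := by
  rcases lt_or_gt_of_ne h with h | h
  · rw [Qs, Qs, if_pos h, if_neg (not_lt_of_gt h)]
  · rw [Qs, Qs, if_neg (not_lt_of_gt h), if_pos h]

lemma main_pos (q m k t : ℕ) (hq : 2 ∣ q) (hq0 : 0 < q) (hk : k < m) (ht : 0 < t)
    (Q : Fin m → Fin m → ZMod q) (g : Fin m → ZMod q) (g' : ZMod q)
    (f : (Fin m → ℕ) → ZMod q)
    (hf : ∀ x : Fin m → ℕ, (∀ i, x i ≤ 1) →
      f x = (∑ α : Fin m, ∑ β : Fin m,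
          if α < β then Q α β * (x α : ZMod q) * (x β : ZMod q) else 0)
        + ∑ i : Fin m, g i * (x i : ZMod q) + g')
    (J : Fin k → Fin m)
    (π : Fin (m - k) → Fin m) (hπ : Function.Injective π)
    (hπJ : ∀ i α, π i ≠ J α)
    (hcover : ∀ v : Fin m, (∀ α, v ≠ J α) → ∃ i, π i = v)
    (hedge : ∀ α β : Fin m, α < β → (∀ γ, α ≠ J γ) → (∀ γ, β ≠ J γ) →
      (∃ i : Fin (m - k), ∃ hi : (i : ℕ) + 1 < m - k,
          (π i = α ∧ π ⟨(i : ℕ) + 1, hi⟩ = β) ∨ (π i = β ∧ π ⟨(i : ℕ) + 1, hi⟩ = α)) →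
        Q α β = ((q / 2 : ℕ) : ZMod q))
    (hnonedge : ∀ α β : Fin m, α < β → (∀ γ, α ≠ J γ) → (∀ γ, β ≠ J γ) →
      (¬ ∃ i : Fin (m - k), ∃ hi : (i : ℕ) + 1 < m - k,
          (π i = α ∧ π ⟨(i : ℕ) + 1, hi⟩ = β) ∨ (π i = β ∧ π ⟨(i : ℕ) + 1, hi⟩ = α)) →
        Q α β = 0)
    (a : Fin m) (ha : a = π ⟨0, by omega⟩ ∨ a = π ⟨m - k - 1, by omega⟩) :
    ∑ d : Fin k → Bool, ∑ dd : Bool,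
      ∑ i ∈ Finset.range (2^m - t),
        psi q m (fun x => f x + ((q / 2 : ℕ) : ZMod q)
            * (((∑ α : Fin k, (d α).toNat * x (J α)) + dd.toNat * x a : ℕ) : ZMod q)) (i + t)
        * (starRingEnd ℂ) (psi q m (fun x => f x + ((q / 2 : ℕ) : ZMod q)
            * (((∑ α : Fin k, (d α).toNat * x (J α)) + dd.toNat * x a : ℕ) : ZMod q)) i)
      = 0 := by
  classical
  have hn : 0 < m - k := by omega
  have hpsi : ∀ (d : Fin k → Bool) (dd : Bool) (j : ℕ),
      psi q m (fun x => f x + ((q / 2 : ℕ) : ZMod q)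
          * (((∑ α : Fin k, (d α).toNat * x (J α)) + dd.toNat * x a : ℕ) : ZMod q)) j
      = chi q (f (bitv m j)) * (-1:ℂ) ^ ((∑ α : Fin k, (d α).toNat * bitv m j (J α))
          + dd.toNat * bitv m j a) := by
    intro d dd j
    show chi q (f (bitv m j) + _) = _
    rw [chi_add hq0, chi_q2_mul hq hq0]
  have hterm : ∀ (d : Fin k → Bool) (dd : Bool) (i : ℕ),
      psi q m (fun x => f x + ((q / 2 : ℕ) : ZMod q)
          * (((∑ α : Fin k, (d α).toNat * x (J α)) + dd.toNat * x a : ℕ) : ZMod q)) (i + t)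
      * (starRingEnd ℂ) (psi q m (fun x => f x + ((q / 2 : ℕ) : ZMod q)
          * (((∑ α : Fin k, (d α).toNat * x (J α)) + dd.toNat * x a : ℕ) : ZMod q)) i)
      = (chi q (f (bitv m (i+t))) * (starRingEnd ℂ) (chi q (f (bitv m i))))
        * (-1:ℂ) ^ ((∑ α : Fin k, (d α).toNat * (bitv m (i+t) (J α) + bitv m i (J α)))
            + dd.toNat * (bitv m (i+t) a + bitv m i a)) := by
    intro d dd i
    rw [hpsi, hpsi, map_mul]
    have hc2 : (starRingEnd ℂ) ((-1:ℂ) ^ ((∑ α : Fin k, (d α).toNat * bitv m i (J α))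
        + dd.toNat * bitv m i a)) = (-1:ℂ) ^ ((∑ α : Fin k, (d α).toNat * bitv m i (J α))
        + dd.toNat * bitv m i a) := by
      simp only [map_pow, map_neg, map_one]
    rw [hc2]
    have hexp : ((∑ α : Fin k, (d α).toNat * bitv m (i+t) (J α)) + dd.toNat * bitv m (i+t) a)
        + ((∑ α : Fin k, (d α).toNat * bitv m i (J α)) + dd.toNat * bitv m i a)
        = (∑ α : Fin k, (d α).toNat * (bitv m (i+t) (J α) + bitv m i (J α)))
          + dd.toNat * (bitv m (i+t) a + bitv m i a) := by
      have hs : (∑ α : Fin k, (d α).toNat * (bitv m (i+t) (J α) + bitv m i (J α)))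
          = (∑ α : Fin k, (d α).toNat * bitv m (i+t) (J α))
            + ∑ α : Fin k, (d α).toNat * bitv m i (J α) := by
        rw [← Finset.sum_add_distrib]
        exact Finset.sum_congr rfl fun α _ => Nat.mul_add _ _ _
      rw [hs]
      ring
    rw [← hexp, pow_add]
    ring
  -- the path-weight facts at the level of π
  have hQsedge : ∀ p : Fin (m-k), ∀ hp : (p:ℕ)+1 < m-k,
      Qs Q (π p) (π ⟨(p:ℕ)+1, hp⟩) = ((q/2:ℕ):ZMod q) := by
    intro p hp
    have hne : π p ≠ π ⟨(p:ℕ)+1, hp⟩ := by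
      intro hc
      have := congrArg Fin.val (hπ hc)
      simp at this
    rcases lt_or_gt_of_ne hne with h | h
    · rw [Qs, if_pos h]
      exact hedge _ _ h (hπJ p) (hπJ _) ⟨p, hp, Or.inl ⟨rfl, rfl⟩⟩
    · rw [Qs, if_neg (not_lt_of_gt h)]
      exact hedge _ _ h (hπJ _) (hπJ p) ⟨p, hp, Or.inr ⟨rfl, rfl⟩⟩
  have hQsnon : ∀ p p' : Fin (m-k), p ≠ p' → ((p':ℕ) ≠ (p:ℕ)+1) → ((p:ℕ) ≠ (p':ℕ)+1) →
      Qs Q (π p) (π p') = 0 := by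
    intro p p' h1 h2 h3
    have hne : π p ≠ π p' := fun hc => h1 (hπ hc)
    have hnE : ¬∃ i : Fin (m-k), ∃ hi : (i:ℕ)+1 < m-k,
        (π i = π p ∧ π ⟨(i:ℕ)+1,hi⟩ = π p') ∨ (π i = π p' ∧ π ⟨(i:ℕ)+1,hi⟩ = π p) := by
      rintro ⟨i, hi, ⟨e1, e2⟩ | ⟨e1, e2⟩⟩
      · have v1 := congrArg Fin.val (hπ e1)
        have v2 := congrArg Fin.val (hπ e2)
        simp at v1 v2
        omega
      · have v1 := congrArg Fin.val (hπ e1)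
        have v2 := congrArg Fin.val (hπ e2)
        simp at v1 v2
        omega
    rcases lt_or_gt_of_ne hne with h | h
    · rw [Qs, if_pos h]
      exact hnonedge _ _ h (hπJ p) (hπJ p') hnE
    · rw [Qs, if_neg (not_lt_of_gt h)]
      refine hnonedge _ _ h (hπJ p') (hπJ p) ?_
      rintro ⟨i, hi, ⟨e1, e2⟩ | ⟨e1, e2⟩⟩
      · exact hnE ⟨i, hi, Or.inr ⟨e1, e2⟩⟩
      · exact hnE ⟨i, hi, Or.inl ⟨e1, e2⟩⟩
  -- the filtered sum vanishes
  have KC : ∑ i ∈ (Finset.range (2^m - t)).filter (fun i =>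
        (∀ γ : Fin k, bitv m (i+t) (J γ) = bitv m i (J γ)) ∧ bitv m (i+t) a = bitv m i a),
      chi q (f (bitv m (i+t))) * (starRingEnd ℂ) (chi q (f (bitv m i))) = 0 := by
    rcases ha with ha | ha
    · exact key_cancel q m k t (m-k) hq hq0 ht Q g g' f hf J π hπ hπJ hcover
        hQsedge hQsnon a hn (ha.trans (congrArg π (Fin.ext rfl)))
    · -- reverse the path
      have hlt : ∀ p : Fin (m-k), m - k - 1 - (p:ℕ) < m - k := by
        intro p
        omega
      set σ : Fin (m-k) → Fin m := fun p => π ⟨m - k - 1 - (p:ℕ), hlt p⟩ with hσdef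
      have hσval : ∀ p : Fin (m-k), σ p = π ⟨m - k - 1 - (p:ℕ), hlt p⟩ := fun p => rfl
      have hσ : Function.Injective σ := by
        intro p p' hc
        have := congrArg Fin.val (hπ hc)
        simp only [Fin.val_mk] at this
        have hp := p.is_lt
        have hp' := p'.is_lt
        exact Fin.ext (by omega)
      have hσJ : ∀ p γ, σ p ≠ J γ := fun p γ => hπJ _ γ
      have hσcover : ∀ v : Fin m, (∀ γ, v ≠ J γ) → ∃ p, σ p = v := by
        intro v hv
        obtain ⟨p, hp⟩ := hcover v hv
        refine ⟨⟨m - k - 1 - (p:ℕ), by omega⟩, ?_⟩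
        rw [hσval]
        refine Eq.trans (congrArg π (Fin.ext ?_)) hp
        simp only [Fin.val_mk]
        have := p.is_lt
        omega
      have hQpathσ : ∀ p : Fin (m-k), ∀ hp : (p:ℕ)+1 < m-k,
          Qs Q (σ p) (σ ⟨(p:ℕ)+1, hp⟩) = ((q/2:ℕ):ZMod q) := by
        intro p hp
        rw [hσval, hσval]
        have h2 : (m - k - 1 - ((p:ℕ)+1)) + 1 < m - k := by omega
        have hr : (⟨(m - k - 1 - ((p:ℕ)+1)) + 1, h2⟩ : Fin (m-k))
            = ⟨m - k - 1 - (p:ℕ), hlt p⟩ := Fin.ext (by simp only [Fin.val_mk]; omega)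
        rw [Qs_symm]
        · rw [show (⟨m - k - 1 - (((⟨(p:ℕ)+1, hp⟩ : Fin (m-k)):ℕ)), hlt _⟩ : Fin (m-k))
              = ⟨m - k - 1 - ((p:ℕ)+1), by omega⟩ from Fin.ext (by simp only [Fin.val_mk]),
            ← hr]
          exact hQsedge ⟨m - k - 1 - ((p:ℕ)+1), by omega⟩ h2
        · intro hc
          have := congrArg Fin.val (hπ hc)
          simp only [Fin.val_mk] at this
          omega
      have hQnonσ : ∀ p p' : Fin (m-k), p ≠ p' → ((p':ℕ) ≠ (p:ℕ)+1) → ((p:ℕ) ≠ (p':ℕ)+1) →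
          Qs Q (σ p) (σ p') = 0 := by
        intro p p' h1 h2 h3
        have hv : (p:ℕ) ≠ (p':ℕ) := fun hc => h1 (Fin.ext hc)
        have hp := p.is_lt
        have hp' := p'.is_lt
        rw [hσval, hσval]
        refine hQsnon _ _ ?_ ?_ ?_
        · intro hc
          have := congrArg Fin.val hc
          simp only [Fin.val_mk] at this
          omega
        · simp only [Fin.val_mk]
          omega
        · simp only [Fin.val_mk]
          omega
      have haσ : a = σ ⟨0, hn⟩ := by
        rw [hσval]
        exact ha.trans (congrArg π (Fin.ext (by simp only [Fin.val_mk]; omega)))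
      exact key_cancel q m k t (m-k) hq hq0 ht Q g g' f hf J σ hσ hσJ hσcover
        hQpathσ hQnonσ a hn haσ
  -- assemble
  calc (∑ d : Fin k → Bool, ∑ dd : Bool, ∑ i ∈ Finset.range (2^m - t),
        psi q m (fun x => f x + ((q / 2 : ℕ) : ZMod q)
            * (((∑ α : Fin k, (d α).toNat * x (J α)) + dd.toNat * x a : ℕ) : ZMod q)) (i + t)
        * (starRingEnd ℂ) (psi q m (fun x => f x + ((q / 2 : ℕ) : ZMod q)
            * (((∑ α : Fin k, (d α).toNat * x (J α)) + dd.toNat * x a : ℕ) : ZMod q)) i))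
      = ∑ d : Fin k → Bool, ∑ dd : Bool, ∑ i ∈ Finset.range (2^m - t),
          (chi q (f (bitv m (i+t))) * (starRingEnd ℂ) (chi q (f (bitv m i))))
          * (-1:ℂ) ^ ((∑ α : Fin k, (d α).toNat * (bitv m (i+t) (J α) + bitv m i (J α)))
              + dd.toNat * (bitv m (i+t) a + bitv m i a)) := by
        exact Finset.sum_congr rfl fun d _ => Finset.sum_congr rfl fun dd _ =>
          Finset.sum_congr rfl fun i _ => hterm d dd i
    _ = ∑ d : Fin k → Bool, ∑ i ∈ Finset.range (2^m - t), ∑ dd : Bool,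
          (chi q (f (bitv m (i+t))) * (starRingEnd ℂ) (chi q (f (bitv m i))))
          * (-1:ℂ) ^ ((∑ α : Fin k, (d α).toNat * (bitv m (i+t) (J α) + bitv m i (J α)))
              + dd.toNat * (bitv m (i+t) a + bitv m i a)) := by
        exact Finset.sum_congr rfl fun d _ => Finset.sum_comm
    _ = ∑ i ∈ Finset.range (2^m - t), ∑ d : Fin k → Bool, ∑ dd : Bool,
          (chi q (f (bitv m (i+t))) * (starRingEnd ℂ) (chi q (f (bitv m i))))
          * (-1:ℂ) ^ ((∑ α : Fin k, (d α).toNat * (bitv m (i+t) (J α) + bitv m i (J α)))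
              + dd.toNat * (bitv m (i+t) a + bitv m i a)) := Finset.sum_comm
    _ = ∑ i ∈ Finset.range (2^m - t),
          (chi q (f (bitv m (i+t))) * (starRingEnd ℂ) (chi q (f (bitv m i))))
          * ∑ d : Fin k → Bool, ∑ dd : Bool,
            (-1:ℂ) ^ ((∑ α : Fin k, (d α).toNat * (bitv m (i+t) (J α) + bitv m i (J α)))
              + dd.toNat * (bitv m (i+t) a + bitv m i a)) := by
        refine Finset.sum_congr rfl fun i _ => ?_
        rw [Finset.mul_sum]
        refine Finset.sum_congr rfl fun d _ => ?_
        rw [Finset.mul_sum]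
    _ = ∑ i ∈ Finset.range (2^m - t),
          (if (∀ γ : Fin k, bitv m (i+t) (J γ) = bitv m i (J γ)) ∧ bitv m (i+t) a = bitv m i a
            then (chi q (f (bitv m (i+t))) * (starRingEnd ℂ) (chi q (f (bitv m i)))) * (2:ℂ)^(k+1)
            else 0) := by
        refine Finset.sum_congr rfl fun i _ => ?_
        rw [dsum k (fun α => bitv m (i+t) (J α) + bitv m i (J α))
          (bitv m (i+t) a + bitv m i a), mul_ite, mul_zero]
        have hiff : ((∀ α : Fin k, Even (bitv m (i+t) (J α) + bitv m i (J α)))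
            ∧ Even (bitv m (i+t) a + bitv m i a))
            ↔ ((∀ γ : Fin k, bitv m (i+t) (J γ) = bitv m i (J γ))
              ∧ bitv m (i+t) a = bitv m i a) := by
          constructor
          · rintro ⟨h1, h2⟩
            exact ⟨fun γ => (even_bits _ _ (bitv_le_one _ _ _) (bitv_le_one _ _ _)).mp (h1 γ),
              (even_bits _ _ (bitv_le_one _ _ _) (bitv_le_one _ _ _)).mp h2⟩
          · rintro ⟨h1, h2⟩
            exact ⟨fun γ => (even_bits _ _ (bitv_le_one _ _ _) (bitv_le_one _ _ _)).mpr (h1 γ),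
              (even_bits _ _ (bitv_le_one _ _ _) (bitv_le_one _ _ _)).mpr h2⟩
        exact if_congr hiff rfl rfl
    _ = ∑ i ∈ (Finset.range (2^m - t)).filter (fun i =>
          (∀ γ : Fin k, bitv m (i+t) (J γ) = bitv m i (J γ)) ∧ bitv m (i+t) a = bitv m i a),
          (chi q (f (bitv m (i+t))) * (starRingEnd ℂ) (chi q (f (bitv m i)))) * (2:ℂ)^(k+1) :=
        (Finset.sum_filter _ _).symm
    _ = (∑ i ∈ (Finset.range (2^m - t)).filter (fun i =>
          (∀ γ : Fin k, bitv m (i+t) (J γ) = bitv m i (J γ)) ∧ bitv m (i+t) a = bitv m i a),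
          chi q (f (bitv m (i+t))) * (starRingEnd ℂ) (chi q (f (bitv m i)))) * (2:ℂ)^(k+1) :=
        (Finset.sum_mul _ _ _).symm
    _ = 0 := by rw [KC, zero_mul]

end PT12


/-- Paterson's Theorem 12: if deleting the `k` vertices `x_{J(0)},…,x_{J(k-1)}` from the
graph of the quadratic GBF `f` leaves a path on the remaining `m-k` vertices with all
edges of weight `q/2`, then `{ψ(f + (q/2)(Σ d_α x_{J(α)} + d x_a))}` is a complementary
set of size `2^{k+1}`. -/
theorem paterson_theorem12 (q m k : ℕ) (hq : 2 ∣ q) (hq0 : 0 < q) (hk : k < m)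
    (Q : Fin m → Fin m → ZMod q) (g : Fin m → ZMod q) (g' : ZMod q)
    (f : (Fin m → ℕ) → ZMod q)
    (hf : ∀ x : Fin m → ℕ, (∀ i, x i ≤ 1) →
      f x = (∑ α : Fin m, ∑ β : Fin m,
          if α < β then Q α β * (x α : ZMod q) * (x β : ZMod q) else 0)
        + ∑ i : Fin m, g i * (x i : ZMod q) + g')
    (J : Fin k → Fin m) (hJ : Function.Injective J)
    (π : Fin (m - k) → Fin m) (hπ : Function.Injective π)
    (hπJ : ∀ i α, π i ≠ J α)
    (hcover : ∀ v : Fin m, (∀ α, v ≠ J α) → ∃ i, π i = v)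
    (hedge : ∀ α β : Fin m, α < β → (∀ γ, α ≠ J γ) → (∀ γ, β ≠ J γ) →
      (∃ i : Fin (m - k), ∃ hi : (i : ℕ) + 1 < m - k,
          (π i = α ∧ π ⟨(i : ℕ) + 1, hi⟩ = β) ∨ (π i = β ∧ π ⟨(i : ℕ) + 1, hi⟩ = α)) →
        Q α β = ((q / 2 : ℕ) : ZMod q))
    (hnonedge : ∀ α β : Fin m, α < β → (∀ γ, α ≠ J γ) → (∀ γ, β ≠ J γ) →
      (¬ ∃ i : Fin (m - k), ∃ hi : (i : ℕ) + 1 < m - k,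
          (π i = α ∧ π ⟨(i : ℕ) + 1, hi⟩ = β) ∨ (π i = β ∧ π ⟨(i : ℕ) + 1, hi⟩ = α)) →
        Q α β = 0)
    (a : Fin m) (ha : a = π ⟨0, by omega⟩ ∨ a = π ⟨m - k - 1, by omega⟩) :
    ∀ τ : ℤ, τ ≠ 0 →
      ∑ d : Fin k → Bool, ∑ dd : Bool,
        aC (2 ^ m) (psi q m (fun x => f x
          + ((q / 2 : ℕ) : ZMod q)
            * (((∑ α : Fin k, (d α).toNat * x (J α)) + dd.toNat * x a : ℕ) : ZMod q))) τ
      = 0 := by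
  intro τ hτ
  by_cases hpos : 0 ≤ τ ∧ τ < ((2^m : ℕ) : ℤ)
  · have ht0 : 0 < τ.toNat := by omega
    have hunf : ∀ (F : ℕ → ℂ), aC (2^m) F τ
        = ∑ i ∈ Finset.range (2^m - τ.toNat), F (i + τ.toNat) * (starRingEnd ℂ) (F i) := by
      intro F
      unfold aC cC
      rw [if_pos hpos]
    calc (∑ d : Fin k → Bool, ∑ dd : Bool,
          aC (2 ^ m) (psi q m (fun x => f x + ((q / 2 : ℕ) : ZMod q)
            * (((∑ α : Fin k, (d α).toNat * x (J α)) + dd.toNat * x a : ℕ) : ZMod q))) τ)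
        = ∑ d : Fin k → Bool, ∑ dd : Bool,
            ∑ i ∈ Finset.range (2^m - τ.toNat),
              psi q m (fun x => f x + ((q / 2 : ℕ) : ZMod q)
                  * (((∑ α : Fin k, (d α).toNat * x (J α)) + dd.toNat * x a : ℕ) : ZMod q)) (i + τ.toNat)
              * (starRingEnd ℂ) (psi q m (fun x => f x + ((q / 2 : ℕ) : ZMod q)
                  * (((∑ α : Fin k, (d α).toNat * x (J α)) + dd.toNat * x a : ℕ) : ZMod q)) i) :=
          Finset.sum_congr rfl fun d _ => Finset.sum_congr rfl fun dd _ => hunf _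
      _ = 0 := PT12.main_pos q m k τ.toNat hq hq0 hk ht0 Q g g' f hf J π hπ hπJ hcover
            hedge hnonedge a ha
  · by_cases hneg : -((2^m : ℕ) : ℤ) < τ ∧ τ < 0
    · have ht0 : 0 < (-τ).toNat := by omega
      have hunf : ∀ (F : ℕ → ℂ), aC (2^m) F (-τ)
          = ∑ i ∈ Finset.range (2^m - (-τ).toNat), F (i + (-τ).toNat) * (starRingEnd ℂ) (F i) := by
        intro F
        unfold aC cC
        rw [if_pos (⟨by omega, by omega⟩ : 0 ≤ -τ ∧ -τ < ((2^m : ℕ) : ℤ))]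
      have hz : (∑ d : Fin k → Bool, ∑ dd : Bool,
          aC (2 ^ m) (psi q m (fun x => f x + ((q / 2 : ℕ) : ZMod q)
            * (((∑ α : Fin k, (d α).toNat * x (J α)) + dd.toNat * x a : ℕ) : ZMod q))) (-τ)) = 0 := by
        calc (∑ d : Fin k → Bool, ∑ dd : Bool,
            aC (2 ^ m) (psi q m (fun x => f x + ((q / 2 : ℕ) : ZMod q)
              * (((∑ α : Fin k, (d α).toNat * x (J α)) + dd.toNat * x a : ℕ) : ZMod q))) (-τ))
          = ∑ d : Fin k → Bool, ∑ dd : Bool,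
              ∑ i ∈ Finset.range (2^m - (-τ).toNat),
                psi q m (fun x => f x + ((q / 2 : ℕ) : ZMod q)
                    * (((∑ α : Fin k, (d α).toNat * x (J α)) + dd.toNat * x a : ℕ) : ZMod q)) (i + (-τ).toNat)
                * (starRingEnd ℂ) (psi q m (fun x => f x + ((q / 2 : ℕ) : ZMod q)
                    * (((∑ α : Fin k, (d α).toNat * x (J α)) + dd.toNat * x a : ℕ) : ZMod q)) i) :=
            Finset.sum_congr rfl fun d _ => Finset.sum_congr rfl fun dd _ => hunf _
        _ = 0 := PT12.main_pos q m k (-τ).toNat hq hq0 hk ht0 Q g g' f hf J π hπ hπJ hcover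
              hedge hnonedge a ha
      calc (∑ d : Fin k → Bool, ∑ dd : Bool,
            aC (2 ^ m) (psi q m (fun x => f x + ((q / 2 : ℕ) : ZMod q)
              * (((∑ α : Fin k, (d α).toNat * x (J α)) + dd.toNat * x a : ℕ) : ZMod q))) τ)
          = ∑ d : Fin k → Bool, ∑ dd : Bool,
              (starRingEnd ℂ) (aC (2 ^ m) (psi q m (fun x => f x + ((q / 2 : ℕ) : ZMod q)
                * (((∑ α : Fin k, (d α).toNat * x (J α)) + dd.toNat * x a : ℕ) : ZMod q))) (-τ)) :=
            Finset.sum_congr rfl fun d _ => Finset.sum_congr rfl fun dd _ =>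
              PT12.aC_neg _ _ _ hneg.2
        _ = (starRingEnd ℂ) (∑ d : Fin k → Bool, ∑ dd : Bool,
              aC (2 ^ m) (psi q m (fun x => f x + ((q / 2 : ℕ) : ZMod q)
                * (((∑ α : Fin k, (d α).toNat * x (J α)) + dd.toNat * x a : ℕ) : ZMod q))) (-τ)) := by
            rw [map_sum]
            exact Finset.sum_congr rfl fun d _ => (map_sum _ _ _).symm
        _ = 0 := by rw [hz, map_zero]
    · have hzz : ∀ (F : ℕ → ℂ), aC (2^m) F τ = 0 := by
        intro F
        unfold aC cC
        rw [if_neg hpos, if_neg hneg]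
      exact Finset.sum_eq_zero fun d _ => Finset.sum_eq_zero fun dd _ => hzz _
end

section
/- The number of generalized Boolean functions f: {0,1}^m → Z_{2^h} of effective degree at most r satisfies log_2 |F(r,m,h)| = Σ_{i=0}^r h·C(m,i) + Σ_{i=1}^{h-1} (h-i)·C(m, r+i). -/
open Finset

lemma card_zmod_pow_dvd (h k : ℕ) (hk : k ≤ h) :
    ((univ : Finset (ZMod (2 ^ h))).filter fun x => 2 ^ k ∣ x.val).card = 2 ^ (h - k) := by
  haveI : NeZero (2 ^ h) := ⟨by positivity⟩
  have hkpos : (0 : ℕ) < 2 ^ k := by positivity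
  have hpow : 2 ^ k * 2 ^ (h - k) = 2 ^ h := by
    rw [← pow_add]; congr 1; omega
  rw [← Finset.card_range (2 ^ (h - k))]
  have hlt' : ∀ n : ℕ, n < 2 ^ (h - k) → n * 2 ^ k < 2 ^ h := by
    intro n hn
    calc n * 2 ^ k < 2 ^ (h - k) * 2 ^ k := (Nat.mul_lt_mul_right hkpos).mpr hn
      _ = 2 ^ h := by rw [mul_comm]; exact hpow
  refine Finset.card_nbij' (fun x => x.val / 2 ^ k)
      (fun n => ((n * 2 ^ k : ℕ) : ZMod (2 ^ h))) ?_ ?_ ?_ ?_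
  · intro x hx
    simp only [mem_coe, mem_filter, mem_univ, true_and] at hx
    have hlt := ZMod.val_lt x
    obtain ⟨c, hc⟩ := hx
    show x.val / 2 ^ k ∈ range (2 ^ (h - k))
    rw [mem_range, hc, Nat.mul_div_cancel_left _ hkpos]
    by_contra hcon
    push_neg at hcon
    have : 2 ^ k * 2 ^ (h - k) ≤ 2 ^ k * c := Nat.mul_le_mul_left _ hcon
    omega
  · intro n hn
    rw [mem_coe, mem_range] at hn
    simp only [mem_coe, mem_filter, mem_univ, true_and]
    rw [ZMod.val_cast_of_lt (hlt' n hn)]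
    exact dvd_mul_left (2 ^ k) n
  · intro x hx
    simp only [mem_coe, mem_filter, mem_univ, true_and] at hx
    show ((x.val / 2 ^ k * 2 ^ k : ℕ) : ZMod (2 ^ h)) = x
    rw [Nat.div_mul_cancel hx]
    exact ZMod.natCast_rightInverse x
  · intro n hn
    rw [mem_coe, mem_range] at hn
    show (((n * 2 ^ k : ℕ) : ZMod (2 ^ h))).val / 2 ^ k = n
    rw [ZMod.val_cast_of_lt (hlt' n hn), Nat.mul_div_cancel _ hkpos]

lemma sum_card_fun (m : ℕ) (g : ℕ → ℕ) :
    ∑ S : Finset (Fin m), g S.card = ∑ j ∈ range (m + 1), m.choose j * g j := by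
  rw [← Finset.sum_fiberwise_of_maps_to' (t := range (m + 1))
      (g := fun S : Finset (Fin m) => S.card)
      (fun S _ => by
        rw [mem_range]
        show S.card < m + 1
        have := Finset.card_le_univ S
        simp only [Finset.card_univ, Fintype.card_fin] at this
        omega) g]
  refine Finset.sum_congr rfl fun j hj => ?_
  rw [Finset.sum_const, smul_eq_mul]
  congr 1
  have : (univ : Finset (Finset (Fin m))).filter (fun S => S.card = j)
      = Finset.powersetCard j (univ : Finset (Fin m)) := by
    rw [Finset.powersetCard_eq_filter, Finset.powerset_univ]
  rw [this, Finset.card_powersetCard, Finset.card_univ, Fintype.card_fin]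

lemma exponent_eq (m h r : ℕ) :
    ∑ j ∈ range (m + 1), m.choose j * (h - min h (j - r))
      = ∑ i ∈ range (r + 1), h * m.choose i
        + ∑ i ∈ Icc 1 (h - 1), (h - i) * m.choose (r + i) := by
  by_cases hh : h = 0
  · simp [hh]
  have h1 : 1 ≤ h := Nat.one_le_iff_ne_zero.mpr hh
  have hext : ∑ j ∈ range (m + 1), m.choose j * (h - min h (j - r))
      = ∑ j ∈ range (m + r + h + 1), m.choose j * (h - min h (j - r)) := by
    apply Finset.sum_subset
    · intro x hx; simp only [mem_range] at *; omega
    · intro x _ hx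
      simp only [mem_range, not_lt] at hx
      rw [Nat.choose_eq_zero_of_lt (by omega), zero_mul]
  rw [hext]
  have hsplit : ∑ j ∈ range (m + r + h + 1), m.choose j * (h - min h (j - r))
      = ∑ j ∈ range (r + h), m.choose j * (h - min h (j - r)) := by
    rw [eq_comm]
    apply Finset.sum_subset
    · intro x hx; simp only [mem_range] at *; omega
    · intro x _ hx
      simp only [mem_range, not_lt] at hx
      have : min h (x - r) = h := by omega
      rw [this, Nat.sub_self, mul_zero]
  rw [hsplit]
  have hsplit2 : ∑ j ∈ range (r + h), m.choose j * (h - min h (j - r))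
      = ∑ j ∈ range (r + 1), m.choose j * (h - min h (j - r))
        + ∑ j ∈ Ico (r + 1) (r + h), m.choose j * (h - min h (j - r)) := by
    rw [Finset.range_eq_Ico, Finset.range_eq_Ico]
    exact (Finset.sum_Ico_consecutive (fun j => m.choose j * (h - min h (j - r))) (by omega : 0 ≤ r + 1) (by omega : r + 1 ≤ r + h)).symm
  rw [hsplit2]
  congr 1
  · refine Finset.sum_congr rfl fun i hi => ?_
    simp only [mem_range] at hi
    have : min h (i - r) = 0 := by omega
    rw [this, Nat.sub_zero, mul_comm]
  · rw [Finset.sum_Ico_eq_sum_range]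
    have hIcc : Icc 1 (h - 1) = Ico 1 h := by
      rw [← Finset.Ico_add_one_right_eq_Icc]; congr 1; omega
    rw [hIcc, Finset.sum_Ico_eq_sum_range]
    have he : r + h - (r + 1) = h - 1 := by omega
    rw [he]
    refine Finset.sum_congr rfl fun k hk => ?_
    simp only [mem_range] at hk
    have h2 : min h (r + 1 + k - r) = 1 + k := by omega
    have h3 : r + 1 + k = r + (1 + k) := by omega
    rw [h2, h3, mul_comm]

/-- Schmidt's count of generalized Boolean functions of effective degree at most `r`.
A GBF `f : {0,1}^m → ℤ_{2^h}` is identified with its algebraic-normal-form coefficient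
family `a : Finset (Fin m) → ZMod 2^h`; it has effective degree at most `r` iff for
every `0 ≤ i < h` every monomial of degree exceeding `r + i` has coefficient divisible
by `2^{i+1}`. The number of such functions satisfies
`log_2 |F(r,m,h)| = Σ_{i=0}^r h·C(m,i) + Σ_{i=1}^{h-1} (h-i)·C(m,r+i)`. -/
theorem card_effective_degree_le (m h r : ℕ) :
    (Finset.univ.filter fun a : Finset (Fin m) → ZMod (2 ^ h) =>
        ∀ i < h, ∀ S : Finset (Fin m), r + i < S.card → 2 ^ (i + 1) ∣ (a S).val).card
      = 2 ^ (∑ i ∈ Finset.range (r + 1), h * Nat.choose m i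
          + ∑ i ∈ Finset.Icc 1 (h - 1), (h - i) * Nat.choose m (r + i)) := by
  have hset : (Finset.univ.filter fun a : Finset (Fin m) → ZMod (2 ^ h) =>
        ∀ i < h, ∀ S : Finset (Fin m), r + i < S.card → 2 ^ (i + 1) ∣ (a S).val)
      = Fintype.piFinset (fun S : Finset (Fin m) =>
          univ.filter fun x : ZMod (2 ^ h) => 2 ^ (min h (S.card - r)) ∣ x.val) := by
    ext a
    simp only [mem_filter, mem_univ, true_and, Fintype.mem_piFinset]
    constructor
    · intro H S
      rcases Nat.eq_zero_or_pos (min h (S.card - r)) with h0 | h0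
      · simp [h0]
      · have h1 : min h (S.card - r) - 1 < h := by omega
        have h2 : r + (min h (S.card - r) - 1) < S.card := by omega
        have := H _ h1 S h2
        rwa [Nat.sub_add_cancel h0] at this
    · intro H i hi S hS
      exact (pow_dvd_pow 2 (by omega)).trans (H S)
  rw [hset, Fintype.card_piFinset]
  have hfac : ∀ S : Finset (Fin m),
      (univ.filter fun x : ZMod (2 ^ h) => 2 ^ (min h (S.card - r)) ∣ x.val).card
        = 2 ^ (h - min h (S.card - r)) := fun S =>
    card_zmod_pow_dvd h _ (min_le_left _ _)
  rw [Finset.prod_congr rfl (fun S _ => hfac S), Finset.prod_pow_eq_pow_sum]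
  congr 1
  rw [sum_card_fun m (fun j => h - min h (j - r))]
  exact exponent_eq m h r
end
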